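/- arXiv:1808.05010 — 8 statements merged into one kernel-verified Lean document; each statement's English description precedes it below -/
import Mathlib

section
/- Let T be a measure preserving transformation of a measure space (X, F, m) and let A ∈ F be recurrent for T (τ_A < ∞ m-a.e. on A). Then for any B ∈ F with B ⊂ A and m(B) < ∞, one has m(T_A⁻¹ B) ≤ m(B), and moreover m(T_A⁻¹ B) = m(B) if and only if lim_{n→∞} m(T⁻ⁿB \ ∪_{k=0}^{n-1} T⁻ᵏA) = 0. -/
open MeasureTheory Set Filter

/-- First return time to `A` under `T` (`0` if the orbit never returns). -/
noncomputable def retTime {X : Type*} (T : X → X) (A : Set X) (x : X) : ℕ :=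
  sInf {n | 1 ≤ n ∧ T^[n] x ∈ A}

/-- The induced (first-return) map of `T` on `A`. -/
noncomputable def indMap {X : Type*} (T : X → X) (A : Set X) (x : X) : X :=
  T^[retTime T A x] x

/-- `Cn T A B n`: points that enter `B` at time `n` without visiting `A` at times `0,…,n-1`. -/
def Cn {X : Type*} (T : X → X) (A B : Set X) (n : ℕ) : Set X :=
  T^[n] ⁻¹' B \ ⋃ k, ⋃ (_ : k < n), T^[k] ⁻¹' A

/-- `Dn T A B n`: points of `A` whose first return (at time `n`) lands in `B`. -/
def Dn {X : Type*} (T : X → X) (A B : Set X) (n : ℕ) : Set X :=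
  A ∩ T^[n] ⁻¹' B ∩ {x | ∀ k, 1 ≤ k → k < n → T^[k] x ∉ A}

lemma mem_Cn {X : Type*} {T : X → X} {A B : Set X} {n : ℕ} {x : X} :
    x ∈ Cn T A B n ↔ T^[n] x ∈ B ∧ ∀ k, k < n → T^[k] x ∉ A := by
  simp [Cn, mem_diff, mem_iUnion]

lemma mem_Dn {X : Type*} {T : X → X} {A B : Set X} {n : ℕ} {x : X} :
    x ∈ Dn T A B n ↔ x ∈ A ∧ T^[n] x ∈ B ∧ ∀ k, 1 ≤ k → k < n → T^[k] x ∉ A :=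
  and_assoc

lemma preimage_Cn {X : Type*} (T : X → X) (A B : Set X) (n : ℕ) :
    T ⁻¹' (Cn T A B n) = Cn T A B (n + 1) ∪ Dn T A B (n + 1) := by
  ext x
  have hit : ∀ k, T^[k] (T x) = T^[k + 1] x := fun k =>
    (Function.iterate_succ_apply T k x).symm
  simp only [mem_preimage, mem_Cn, mem_Dn, mem_union, hit]
  constructor
  · rintro ⟨hb, hk⟩
    by_cases hx : x ∈ A
    · right
      refine ⟨hx, hb, fun k hk1 hkn hkA => ?_⟩
      obtain ⟨j, rfl⟩ : ∃ j, k = j + 1 := ⟨k - 1, by omega⟩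
      exact hk j (by omega) hkA
    · left
      refine ⟨hb, fun k hkn => ?_⟩
      cases k with
      | zero => simpa using hx
      | succ j => exact hk j (by omega)
  · rintro (⟨hb, hk⟩ | ⟨hx, hb, hk⟩)
    · exact ⟨hb, fun k hkn => hk (k + 1) (by omega)⟩
    · exact ⟨hb, fun k hkn => hk (k + 1) (by omega) (by omega)⟩

/-- For a measure preserving `T` and a recurrent set `A`, for any measurable `B ⊆ A` of finite
measure one has `m(T_A⁻¹ B) ≤ m B`, with equality iff
`m(T⁻ⁿ B \ ⋃_{k<n} T⁻ᵏ A) → 0` as `n → ∞`. -/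
theorem stmt2 {X : Type*} [MeasurableSpace X] (m : Measure X) (T : X → X)
    (hT : MeasurePreserving T m m) (A : Set X) (hA : MeasurableSet A)
    (hrec : m (A ∩ {x | ∀ n, 1 ≤ n → T^[n] x ∉ A}) = 0)
    (B : Set X) (hB : MeasurableSet B) (hBA : B ⊆ A) (hBfin : m B < ⊤) :
    m (A ∩ indMap T A ⁻¹' B) ≤ m B ∧
      (m (A ∩ indMap T A ⁻¹' B) = m B ↔
        Tendsto (fun n => m (T^[n] ⁻¹' B \ ⋃ k, ⋃ (_ : k < n), T^[k] ⁻¹' A))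
          atTop (nhds 0)) := by
  have hTm : Measurable T := hT.measurable
  have hTn : ∀ n, Measurable (T^[n]) := fun n => hTm.iterate n
  have hCmeas : ∀ n, MeasurableSet (Cn T A B n) := fun n =>
    ((hTn n) hB).diff (MeasurableSet.iUnion fun k => MeasurableSet.iUnion fun _ => (hTn k) hA)
  have hDmeas : ∀ n, MeasurableSet (Dn T A B n) := by
    intro n
    refine (hA.inter ((hTn n) hB)).inter ?_
    have : {x | ∀ k, 1 ≤ k → k < n → T^[k] x ∉ A} =
        ⋂ k, ⋂ (_ : 1 ≤ k), ⋂ (_ : k < n), (T^[k] ⁻¹' A)ᶜ := by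
      ext x; simp
    rw [this]
    exact MeasurableSet.iInter fun k => MeasurableSet.iInter fun _ =>
      MeasurableSet.iInter fun _ => ((hTn k) hA).compl
  have hCD : ∀ n, Disjoint (Cn T A B (n + 1)) (Dn T A B (n + 1)) := by
    intro n
    rw [Set.disjoint_left]
    intro x hx hx'
    exact (mem_Cn.1 hx).2 0 (by omega) ((mem_Dn.1 hx').1)
  have hrecm : ∀ n, m (Cn T A B n) = m (Cn T A B (n + 1)) + m (Dn T A B (n + 1)) := by
    intro n
    rw [← hT.measure_preimage (hCmeas n).nullMeasurableSet, preimage_Cn T A B n,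
      measure_union (hCD n) (hDmeas (n + 1))]
  have hC0 : Cn T A B 0 = B := by
    ext x; simp [mem_Cn]
  have hpartial : ∀ n, m B = m (Cn T A B n) + ∑ j ∈ Finset.range n, m (Dn T A B (j + 1)) := by
    intro n
    induction n with
    | zero => simp [hC0]
    | succ n ih =>
        rw [ih, hrecm n, Finset.sum_range_succ]
        ring
  set S : ENNReal := ∑' j, m (Dn T A B (j + 1)) with hS
  set L : ENNReal := ⨅ n, m (Cn T A B n) with hL
  have hCanti : Antitone fun n => m (Cn T A B n) := by
    refine antitone_nat_of_succ_le fun n => ?_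
    rw [hrecm n]; exact le_self_add
  have hCtends : Tendsto (fun n => m (Cn T A B n)) atTop (nhds L) :=
    tendsto_atTop_iInf hCanti
  have hStends : Tendsto (fun n => ∑ j ∈ Finset.range n, m (Dn T A B (j + 1))) atTop (nhds S) :=
    ENNReal.tendsto_nat_tsum _
  have hmB : m B = L + S := by
    have h1 : Tendsto (fun n => m (Cn T A B n) + ∑ j ∈ Finset.range n, m (Dn T A B (j + 1)))
        atTop (nhds (L + S)) := hCtends.add hStends
    have h2 : (fun n => m (Cn T A B n) + ∑ j ∈ Finset.range n, m (Dn T A B (j + 1))) =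
        fun _ => m B := by
      funext n; exact (hpartial n).symm
    rw [h2] at h1
    exact (tendsto_nhds_unique h1 tendsto_const_nhds).symm
  -- D's are pairwise disjoint
  have hDdisj : Pairwise (Function.onFun Disjoint fun j => Dn T A B (j + 1)) := by
    have key : ∀ i j, i < j → Disjoint (Dn T A B (i + 1)) (Dn T A B (j + 1)) := by
      intro i j hij
      rw [Set.disjoint_left]
      intro x hxi hxj
      exact (mem_Dn.1 hxj).2.2 (i + 1) (by omega) (by omega) (hBA (mem_Dn.1 hxi).2.1)
    intro i j hij
    rcases lt_or_gt_of_ne hij with h | h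
    · exact key i j h
    · exact (key j i h).symm
  have hUD : m (⋃ j, Dn T A B (j + 1)) = S := by
    rw [measure_iUnion hDdisj fun j => hDmeas (j + 1)]
  -- identify A ∩ indMap⁻¹'B with ⋃ D up to the null set of non-returning points
  have hsub1 : (⋃ j, Dn T A B (j + 1)) ⊆ A ∩ indMap T A ⁻¹' B := by
    rintro x ⟨_, ⟨j, rfl⟩, hx⟩
    obtain ⟨hxA, hxB, hxk⟩ := mem_Dn.1 hx
    have hret : retTime T A x = j + 1 := by
      have hmem : (j + 1) ∈ {n | 1 ≤ n ∧ T^[n] x ∈ A} := ⟨by omega, hBA hxB⟩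
      refine le_antisymm (Nat.sInf_le hmem) ?_
      by_contra h
      push_neg at h
      have := Nat.sInf_mem (⟨j + 1, hmem⟩ : {n | 1 ≤ n ∧ T^[n] x ∈ A}.Nonempty)
      exact hxk _ this.1 h this.2
    exact ⟨hxA, by simpa [indMap, hret] using hxB⟩
  have hsub2 : A ∩ indMap T A ⁻¹' B ⊆
      (⋃ j, Dn T A B (j + 1)) ∪ (A ∩ {x | ∀ n, 1 ≤ n → T^[n] x ∉ A}) := by
    rintro x ⟨hxA, hxB⟩
    by_cases hret : ∃ n, 1 ≤ n ∧ T^[n] x ∈ A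
    · left
      have hmem := Nat.sInf_mem hret
      set r := sInf {n | 1 ≤ n ∧ T^[n] x ∈ A} with hr
      have hr1 : 1 ≤ r := hmem.1
      refine mem_iUnion.2 ⟨r - 1, mem_Dn.2 ⟨hxA, ?_, fun k hk1 hkr hkA => ?_⟩⟩
      · have h : r - 1 + 1 = r := by omega
        rw [h, hr]
        exact hxB
      · have hlt : k < sInf {n | 1 ≤ n ∧ T^[n] x ∈ A} := by rw [← hr]; omega
        exact Nat.notMem_of_lt_sInf hlt ⟨hk1, hkA⟩
    · right
      push_neg at hret
      exact ⟨hxA, fun n hn => hret n hn⟩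
  have hmeq : m (A ∩ indMap T A ⁻¹' B) = S := by
    refine le_antisymm ?_ ?_
    · calc m (A ∩ indMap T A ⁻¹' B)
          ≤ m ((⋃ j, Dn T A B (j + 1)) ∪ (A ∩ {x | ∀ n, 1 ≤ n → T^[n] x ∉ A})) :=
            measure_mono hsub2
        _ ≤ m (⋃ j, Dn T A B (j + 1)) + m (A ∩ {x | ∀ n, 1 ≤ n → T^[n] x ∉ A}) :=
            measure_union_le _ _
        _ = S := by rw [hrec, hUD, add_zero]
    · rw [← hUD]; exact measure_mono hsub1
  have hSle : S ≤ m B := by rw [hmB]; exact le_add_self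
  have hSfin : S ≠ ⊤ := (lt_of_le_of_lt hSle hBfin).ne
  constructor
  · rw [hmeq]; exact hSle
  · rw [hmeq]
    have hfun : (fun n => m (T^[n] ⁻¹' B \ ⋃ k, ⋃ (_ : k < n), T^[k] ⁻¹' A)) =
        fun n => m (Cn T A B n) := rfl
    rw [hfun]
    constructor
    · intro hSB
      have hL0 : L = 0 := by
        have : L + S = 0 + S := by rw [← hmB, hSB, zero_add]
        exact (ENNReal.add_left_inj hSfin).1 this
      rwa [hL0] at hCtends
    · intro htends
      have hL0 : L = 0 := tendsto_nhds_unique hCtends htends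
      rw [hmB, hL0, zero_add]
end

section
/- Let T be a measure preserving transformation of a σ-finite measure space (X, F, m), and A ∈ F recurrent for T with m(A) > 0. Let ν be a σ-finite T_A-invariant measure on (A, F ∩ A) with ν absolutely continuous with respect to m|_A. Then the measure ν̄ defined by ν̄(B) := ∫_A [∑_{k=0}^{τ_A(x)-1} 1(Tᵏx ∈ B)] ν(dx), B ∈ F, is T-invariant and satisfies ν̄|_A = ν. -/
open MeasureTheory Set
open scoped ENNReal

/-- The lift of a measure `ν` on `A` to the whole space over the return-time tower:
`B ↦ ∫_A ∑_{k=0}^{τ_A(x)-1} 1_B(Tᵏ x) ν(dx)`. -/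
noncomputable def liftFn {X : Type*} [MeasurableSpace X] (T : X → X) (A : Set X)
    (ν : Measure X) (B : Set X) : ℝ≥0∞ :=
  ∫⁻ x in A, ∑ k ∈ Finset.range (retTime T A x), Set.indicator B (1 : X → ℝ≥0∞) (T^[k] x) ∂ν

/-! Summing `f ∘ T` instead of `f` along the excursion `x, T x, …, T^{τ_A(x)-1} x` of a point
`x ∈ A` shifts the excursion by one step. Off `A` this changes nothing, since the excursion starts
and ends in `A`; on `A` it replaces the contribution `f x` by `f (T_A x)`, and these have the same
`ν`-integral because `ν` is `T_A`-invariant. Recurrence and `ν ≪ m|_A` make `ν`-almost every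
point lie in `A` and return to it. -/

section ReturnTime

variable {X : Type*} {T : X → X} {A : Set X} {x : X}

theorem one_le_retTime_iff : 1 ≤ retTime T A x ↔ ∃ n, 1 ≤ n ∧ T^[n] x ∈ A := by
  refine ⟨fun h => ?_, fun hne => (Nat.sInf_mem (s := {n | 1 ≤ n ∧ T^[n] x ∈ A}) hne).1⟩
  by_contra! hnever
  have hempty : {n | 1 ≤ n ∧ T^[n] x ∈ A} = ∅ :=
    eq_empty_of_forall_notMem fun n hn => hnever n hn.1 hn.2
  simp [retTime, hempty] at h

theorem indMap_mem (hx : 1 ≤ retTime T A x) : indMap T A x ∈ A :=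
  (Nat.sInf_mem (one_le_retTime_iff.mp hx)).2

theorem iterate_notMem_of_lt_retTime {k : ℕ} (hk : 1 ≤ k) (hkx : k < retTime T A x) :
    T^[k] x ∉ A :=
  fun hkA => Nat.notMem_of_lt_sInf hkx ⟨hk, hkA⟩

end ReturnTime

noncomputable def towerSum {X M : Type*} [AddCommMonoid M] (T : X → X) (A : Set X)
    (f : X → M) (x : X) : M :=
  ∑ k ∈ Finset.range (retTime T A x), f (T^[k] x)

section TowerSum

variable {X M : Type*} [AddCommMonoid M] {T : X → X} {A : Set X} {x : X}

theorem towerSum_add (f g : X → M) :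
    towerSum T A (f + g) x = towerSum T A f x + towerSum T A g x :=
  Finset.sum_add_distrib

theorem towerSum_comp (f : X → M) :
    towerSum T A (f ∘ T) x = ∑ k ∈ Finset.range (retTime T A x), f (T^[k + 1] x) := by
  simp only [towerSum, Function.comp_apply, Function.iterate_succ_apply']

theorem sum_range_indicator_iterate_succ (g : X → M) {n : ℕ} (hn : n < retTime T A x) :
    ∑ k ∈ Finset.range n, A.indicator g (T^[k + 1] x) = 0 :=
  Finset.sum_eq_zero fun k hk =>
    indicator_of_notMem (iterate_notMem_of_lt_retTime (by omega)
      (by have := Finset.mem_range.mp hk; omega)) g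

theorem towerSum_indicator (g : X → M) (hx : 1 ≤ retTime T A x) :
    towerSum T A (A.indicator g) x = A.indicator g x := by
  obtain ⟨n, hn⟩ := Nat.exists_eq_add_of_le' hx
  rw [towerSum, hn, Finset.sum_range_succ',
    sum_range_indicator_iterate_succ g (hn ▸ n.lt_succ_self), zero_add,
    Function.iterate_zero_apply]

theorem towerSum_indicator_comp (g : X → M) (hx : 1 ≤ retTime T A x) :
    towerSum T A (A.indicator g ∘ T) x = A.indicator g (indMap T A x) := by
  obtain ⟨n, hn⟩ := Nat.exists_eq_add_of_le' hx
  rw [towerSum_comp, indMap, hn, Finset.sum_range_succ,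
    sum_range_indicator_iterate_succ g (hn ▸ n.lt_succ_self), zero_add]

theorem towerSum_indicator_compl_comp (g : X → M) (hxA : x ∈ A) (hx : 1 ≤ retTime T A x) :
    towerSum T A (Aᶜ.indicator g ∘ T) x = towerSum T A (Aᶜ.indicator g) x := by
  have hret : T^[retTime T A x] x ∉ Aᶜ := not_not.mpr (indMap_mem hx)
  obtain ⟨n, hn⟩ := Nat.exists_eq_add_of_le' hx
  rw [hn] at hret
  rw [towerSum_comp, towerSum, hn, Finset.sum_range_succ, Finset.sum_range_succ',
    indicator_of_notMem hret, Function.iterate_zero_apply, indicator_of_notMem (not_not.mpr hxA)]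

theorem towerSum_eq_indicator_add (f : X → M) (hx : 1 ≤ retTime T A x) :
    towerSum T A f x = A.indicator f x + towerSum T A (Aᶜ.indicator f) x := by
  rw [← towerSum_indicator f hx, ← towerSum_add, indicator_self_add_compl]

theorem towerSum_comp_eq_indicator_indMap_add (f : X → M) (hxA : x ∈ A)
    (hx : 1 ≤ retTime T A x) :
    towerSum T A (f ∘ T) x = A.indicator f (indMap T A x) + towerSum T A (Aᶜ.indicator f) x := by
  rw [← towerSum_indicator_comp f hx, ← towerSum_indicator_compl_comp f hxA hx, ← towerSum_add,
    ← Pi.add_comp, indicator_self_add_compl]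

end TowerSum

section Lift

variable {X : Type*} [MeasurableSpace X] {T : X → X} {A : Set X} {m ν : Measure X}

theorem ae_one_le_retTime (hA : MeasurableSet A)
    (hrec : m (A ∩ {x | ∀ n, 1 ≤ n → T^[n] x ∉ A}) = 0) (hac : ν ≪ m.restrict A) :
    ∀ᵐ x ∂ν, 1 ≤ retTime T A x := by
  refine hac.ae_le ((ae_restrict_iff' hA).mpr (measure_mono_null (fun x hx => ?_) hrec))
  by_contra hret
  exact hx fun hxA => one_le_retTime_iff.mpr (by simpa [hxA] using hret)

theorem lintegral_towerSum_comp {f : X → ℝ≥0∞} (hf : Measurable f) (hA : MeasurableSet A)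
    (hν : MeasurePreserving (indMap T A) ν ν) (hae : ∀ᵐ x ∂ν, x ∈ A ∧ 1 ≤ retTime T A x) :
    ∫⁻ x, towerSum T A (f ∘ T) x ∂ν = ∫⁻ x, towerSum T A f x ∂ν := by
  have hfA : Measurable (A.indicator f) := hf.indicator hA
  calc ∫⁻ x, towerSum T A (f ∘ T) x ∂ν
      = ∫⁻ x, A.indicator f (indMap T A x) + towerSum T A (Aᶜ.indicator f) x ∂ν :=
        lintegral_congr_ae <| hae.mono fun x ⟨hxA, hx⟩ =>
          towerSum_comp_eq_indicator_indMap_add f hxA hx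
    _ = ∫⁻ x, A.indicator f x ∂ν + ∫⁻ x, towerSum T A (Aᶜ.indicator f) x ∂ν := by
        rw [lintegral_add_left (f := fun x => A.indicator f (indMap T A x))
          (hfA.comp hν.measurable), hν.lintegral_comp hfA]
    _ = ∫⁻ x, towerSum T A f x ∂ν := by
        rw [← lintegral_add_left hfA]
        exact lintegral_congr_ae <| hae.mono fun x ⟨_, hx⟩ =>
          (towerSum_eq_indicator_add f hx).symm

theorem lintegral_towerSum_of_support_subset {f : X → ℝ≥0∞} (hf : Function.support f ⊆ A)
    (hae : ∀ᵐ x ∂ν, 1 ≤ retTime T A x) :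
    ∫⁻ x, towerSum T A f x ∂ν = ∫⁻ x, f x ∂ν := by
  have hfA : A.indicator f = f := indicator_eq_self.mpr hf
  exact lintegral_congr_ae <| hae.mono fun x hx => by
    simpa only [hfA] using towerSum_indicator f hx

end Lift

theorem stmt5_general {X : Type*} [MeasurableSpace X] (m : Measure X) (T : X → X)
    (A : Set X) (hA : MeasurableSet A)
    (hrec : m (A ∩ {x | ∀ n, 1 ≤ n → T^[n] x ∉ A}) = 0)
    (ν : Measure X) (hac : ν ≪ m.restrict A)
    (hνinv : MeasurePreserving (indMap T A) ν ν) :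
    (∀ B : Set X, MeasurableSet B → liftFn T A ν (T ⁻¹' B) = liftFn T A ν B) ∧
      (∀ B : Set X, MeasurableSet B → B ⊆ A → liftFn T A ν B = ν B) := by
  have hmem : ∀ᵐ x ∂ν, x ∈ A := hac.ae_le (ae_restrict_mem hA)
  have hret : ∀ᵐ x ∂ν, 1 ≤ retTime T A x := ae_one_le_retTime hA hrec hac
  have hlift : ∀ B, liftFn T A ν B = ∫⁻ x, towerSum T A (B.indicator 1) x ∂ν := fun B => by
    rw [liftFn, Measure.restrict_eq_self_of_ae_mem hmem]
    rfl
  refine ⟨fun B hB => ?_, fun B hB hBA => ?_⟩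
  · rw [hlift, hlift]
    exact lintegral_towerSum_comp (measurable_one.indicator hB) hA hνinv (hmem.and hret)
  · rw [hlift, lintegral_towerSum_of_support_subset (support_indicator_subset.trans hBA) hret,
      lintegral_indicator_one hB]

/-- Kac-type lifting: if `T` preserves the σ-finite measure `m`, `A` is recurrent for `T`
with `m A > 0`, and `ν` is a σ-finite `T_A`-invariant measure on `A` absolutely continuous
with respect to `m|_A`, then the lifted set function `ν̄` is `T`-invariant and restricts to
`ν` on `A`. -/
theorem stmt5 {X : Type*} [MeasurableSpace X] (m : Measure X) [SigmaFinite m] (T : X → X)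
    (hT : MeasurePreserving T m m) (A : Set X) (hA : MeasurableSet A) (hpos : 0 < m A)
    (hrec : m (A ∩ {x | ∀ n, 1 ≤ n → T^[n] x ∉ A}) = 0)
    (ν : Measure X) [SigmaFinite ν] (hνA : ν Aᶜ = 0) (hac : ν ≪ m.restrict A)
    (hνinv : MeasurePreserving (indMap T A) ν ν) :
    (∀ B : Set X, MeasurableSet B → liftFn T A ν (T ⁻¹' B) = liftFn T A ν B) ∧
      (∀ B : Set X, MeasurableSet B → B ⊆ A → liftFn T A ν B = ν B) :=
  stmt5_general m T A hA hrec ν hac hνinv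
end

section
/- (Maharam's recurrence theorem) Let T be a measure preserving transformation of a σ-finite measure space (X, F, m). If there exists a measurable set A with m(A) < ∞ such that X = ∪_{k≥1} T⁻ᵏ A mod m (i.e. τ_A < ∞ a.e. on X), then T is conservative. -/
/-!
If no point of `s` ever returns to `s`, the preimages `T⁻ⁿ s` are pairwise disjoint, so for each `n`
the sets `T⁻⁽ⁿ⁻ʲ⁾ (s ∩ T⁻ʲ A)`, `j < n`, are disjoint subsets of `T⁻ⁿ A`. Measure preservation then
gives `∑ⱼ m (s ∩ T⁻ʲ A) ≤ m A < ∞`, and by Borel–Cantelli almost every point of `s` visits `A` only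
finitely often. On the other hand, since almost every point visits `A` at least once and `T` is
non-singular, almost every point visits `A` infinitely often. Hence `m s = 0`.
-/

open MeasureTheory Set Filter Function

lemma Function.pairwise_disjoint_preimage_iterate {α : Type*} {T : α → α} {s : Set α}
    (h : ∀ x ∈ s, ∀ n ≠ 0, T^[n] x ∉ s) :
    Pairwise (Disjoint on fun n => T^[n] ⁻¹' s) := by
  refine pairwise_disjoint_on _ |>.2 fun i j hij => disjoint_left.2 fun x hi hj => ?_
  refine h _ hi (j - i) (by omega) ?_
  rwa [← iterate_add_apply, Nat.sub_add_cancel hij.le]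

namespace MeasureTheory

variable {X : Type*} [MeasurableSpace X] {m : Measure X} {T : X → X} {s A : Set X}

lemma MeasurePreserving.sum_measure_inter_preimage_iterate_le (hT : MeasurePreserving T m m)
    (hs : MeasurableSet s) (hdisj : Pairwise (Disjoint on fun n => T^[n] ⁻¹' s))
    (hA : MeasurableSet A) (n : ℕ) :
    ∑ j ∈ Finset.range n, m (s ∩ T^[j] ⁻¹' A) ≤ m A := by
  have hmeas (k : ℕ) : MeasurableSet (T^[k] ⁻¹' s) := hs.preimage (hT.measurable.iterate k)
  have hpull : ∀ j ∈ Finset.range n,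
      m (s ∩ T^[j] ⁻¹' A) = m.restrict (T^[n] ⁻¹' A) (T^[n - j] ⁻¹' s) := by
    intro j hj
    rw [Measure.restrict_apply (hmeas _), ← (hT.iterate (n - j)).measure_preimage
      (hs.inter (hA.preimage (hT.measurable.iterate j))).nullMeasurableSet, preimage_inter,
      ← preimage_comp, ← iterate_add, Nat.add_sub_cancel' (Finset.mem_range.1 hj).le]
  calc ∑ j ∈ Finset.range n, m (s ∩ T^[j] ⁻¹' A)
      = ∑ j ∈ Finset.range n, m.restrict (T^[n] ⁻¹' A) (T^[n - j] ⁻¹' s) :=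
        Finset.sum_congr rfl hpull
    _ ≤ m.restrict (T^[n] ⁻¹' A) univ :=
      sum_measure_le_measure_univ (fun _ _ => (hmeas _).nullMeasurableSet)
        fun i hi j hj hij => (hdisj fun h => hij <| by
          simp only [Finset.coe_range, mem_Iio] at hi hj; omega).aedisjoint
    _ = m A := by
      rw [Measure.restrict_apply_univ, (hT.iterate n).measure_preimage hA.nullMeasurableSet]

lemma MeasurePreserving.ae_mem_imp_eventually_iterate_notMem (hT : MeasurePreserving T m m)
    (hs : MeasurableSet s) (hdisj : Pairwise (Disjoint on fun n => T^[n] ⁻¹' s))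
    (hA : MeasurableSet A) (hAfin : m A < ⊤) :
    ∀ᵐ x ∂m, x ∈ s → ∀ᶠ n in atTop, T^[n] x ∉ A := by
  have hsum : ∑' j, m (s ∩ T^[j] ⁻¹' A) ≠ ⊤ :=
    ((ENNReal.tsum_le_of_sum_range_le
      (hT.sum_measure_inter_preimage_iterate_le hs hdisj hA)).trans_lt hAfin).ne
  filter_upwards [ae_eventually_notMem hsum] with x hx hxs
  exact hx.mono fun _ hn hnA => hn ⟨hxs, hnA⟩

lemma Measure.QuasiMeasurePreserving.ae_frequently_iterate_mem
    (hT : Measure.QuasiMeasurePreserving T m m)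
    (h : ∀ᵐ x ∂m, ∃ n, T^[n] x ∈ A) : ∀ᵐ x ∂m, ∃ᶠ n in atTop, T^[n] x ∈ A := by
  have hall : ∀ᵐ x ∂m, ∀ N, ∃ n, T^[n] (T^[N] x) ∈ A :=
    ae_all_iff.2 fun N => (hT.iterate N).ae h
  filter_upwards [hall] with x hx
  refine frequently_atTop.2 fun N => ?_
  obtain ⟨n, hn⟩ := hx N
  exact ⟨n + N, by omega, by rwa [iterate_add_apply]⟩

end MeasureTheory

theorem stmt8_general {X : Type*} [MeasurableSpace X] (m : Measure X) (T : X → X)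
    (hT : MeasurePreserving T m m) (A : Set X) (hA : MeasurableSet A) (hAfin : m A < ⊤)
    (hcover : m {x | ∀ n, 1 ≤ n → T^[n] x ∉ A} = 0) :
    Conservative T m := by
  refine ⟨hT.quasiMeasurePreserving, fun s hs hs0 => ?_⟩
  by_contra! hwander
  have hvisit : ∀ᵐ x ∂m, ∃ n, T^[n] x ∈ A := by
    filter_upwards [measure_eq_zero_iff_ae_notMem.1 hcover] with x hx
    simp only [not_forall, not_not] at hx
    obtain ⟨n, -, hn⟩ := hx
    exact ⟨n, hn⟩
  have hfreq := hT.quasiMeasurePreserving.ae_frequently_iterate_mem hvisit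
  have hfinite := hT.ae_mem_imp_eventually_iterate_notMem hs
    (pairwise_disjoint_preimage_iterate hwander) hA hAfin
  refine hs0 (measure_eq_zero_iff_ae_notMem.2 ?_)
  filter_upwards [hfreq, hfinite] with x hfreq hfinite hxs
  obtain ⟨n, hnA, hn⟩ := (hfreq.and_eventually (hfinite hxs)).exists
  exact hn hnA

/-- Maharam's recurrence theorem: if `T` preserves the σ-finite measure `m` and there is a
measurable set `A` of finite measure such that `τ_A < ∞` a.e. on `X`
(i.e. `X = ⋃_{k ≥ 1} T⁻ᵏ A` mod `m`), then `T` is conservative. -/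
theorem stmt8 {X : Type*} [MeasurableSpace X] (m : Measure X) [SigmaFinite m] (T : X → X)
    (hT : MeasurePreserving T m m) (A : Set X) (hA : MeasurableSet A) (hAfin : m A < ⊤)
    (hcover : m {x | ∀ n, 1 ≤ n → T^[n] x ∉ A} = 0) :
    Conservative T m :=
  stmt8_general m T hT A hA hAfin hcover
end

section
/- Let Y be a Markov chain on a topological space X with a σ-finite invariant Borel measure μ, recurrent starting under μ. Let A be a Borel set with μ(A) > 0. Then the restricted measure μ_A = μ|_A is an invariant measure for the induced Markov chain Y^A obtained by sampling Y at its successive visits to A. -/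
open MeasureTheory Set
open scoped ENNReal

/-- First hitting time (at time ≥ 1) of a set `A` by a path `ω` (`0` if never hit). -/
noncomputable def hitTime {X : Type*} (A : Set X) (ω : ℕ → X) : ℕ :=
  sInf {n | 1 ≤ n ∧ ω n ∈ A}

/-!
Let `Q = μ.bind P` be the law of the chain started from `μ`; invariance of `μ` makes `Q`
shift invariant. For `B ⊆ E`, splitting `{Y₁ ∈ B}` according to whether `Y₀ ∈ E` and shifting
gives, for every `N`,
`μ B = ∑_{n<N} Q(Y₀ ∈ E, Y₁, …, Yₙ ∉ E, Yₙ₊₁ ∈ B) + Q(Y₁, …, Y_N ∉ E, Y_{N+1} ∈ B)`.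
The remainder is at most the same quantity with `E` replaced by `B`, and that one tends to `0`
when `μ B < ∞`: by recurrence of `B` the first-return terms already sum to `μ B`. So `μ B` is the
`Q`-measure of "`Y₀ ∈ E` and the first entrance into `E` lies in `B`", which is the invariance
identity; σ-finiteness removes the assumption `μ B < ∞`.
-/

open Filter Topology

theorem MeasureTheory.Measure.map_bind {α β γ : Type*} [MeasurableSpace α] [MeasurableSpace β]
    [MeasurableSpace γ] (m : Measure α) {g : α → Measure β} {f : β → γ} (hg : Measurable g)
    (hf : Measurable f) : (m.bind g).map f = m.bind fun a => (g a).map f := by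
  ext s hs
  have hgf : Measurable fun a => (g a).map f := (measurable_map f hf).comp hg
  rw [map_apply hf hs, bind_apply (hf hs) hg.aemeasurable, bind_apply hs hgf.aemeasurable]
  simp only [map_apply hf hs]

namespace InducedChain

variable {X : Type*}

def shift (ω : ℕ → X) (n : ℕ) : X := ω (n + 1)

def noReturn (E : Set X) : Set (ℕ → X) := {ω | ∀ n, 1 ≤ n → ω n ∉ E}

def tabooSet (E B : Set X) (n : ℕ) : Set (ℕ → X) :=
  {ω | (∀ i, 1 ≤ i → i < n → ω i ∉ E) ∧ ω n ∈ B}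

/-- For `B ⊆ E`, the paths whose first visit to `E` after time `0` lies in `B`. -/
def firstEntrance (E B : Set X) : Set (ℕ → X) := ⋃ n, tabooSet E B (n + 1)

lemma tabooSet_anti {E E' : Set X} (B : Set X) (h : E' ⊆ E) (n : ℕ) :
    tabooSet E B n ⊆ tabooSet E' B n :=
  fun _ hω => ⟨fun i hi₁ hi₂ hiE => hω.1 i hi₁ hi₂ (h hiE), hω.2⟩

lemma firstEntrance_mono (E : Set X) {B B' : Set X} (h : B ⊆ B') :
    firstEntrance E B ⊆ firstEntrance E B' :=
  iUnion_mono fun _ _ hω => ⟨hω.1, h hω.2⟩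

lemma firstEntrance_iUnion (E : Set X) (C : ℕ → Set X) :
    firstEntrance E (⋃ k, C k) = ⋃ k, firstEntrance E (C k) := by
  ext ω
  simp only [firstEntrance, tabooSet, mem_iUnion, mem_ofPred_eq]
  constructor
  · rintro ⟨n, hn, k, hk⟩; exact ⟨k, n, hn, hk⟩
  · rintro ⟨k, n, hn, hk⟩; exact ⟨n, hn, k, hk⟩

lemma shift_preimage_eval_zero (E B : Set X) :
    shift ⁻¹' {ω | ω 0 ∈ B} = tabooSet E B 1 := by
  ext ω
  simp only [shift, tabooSet, mem_preimage, mem_ofPred_eq, iff_and_self]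
  intro _ i hi₁ hi₂
  omega

lemma shift_preimage_tabooSet_diff (E B : Set X) (n : ℕ) :
    shift ⁻¹' (tabooSet E B (n + 1) \ {ω | ω 0 ∈ E}) = tabooSet E B (n + 2) := by
  ext ω
  simp only [shift, tabooSet, mem_preimage, Set.mem_sdiff, mem_ofPred_eq]
  constructor
  · rintro ⟨⟨hlt, hB⟩, h₁⟩
    refine ⟨fun i hi₁ hi₂ => ?_, hB⟩
    obtain ⟨_ | j, rfl⟩ : ∃ j, i = j + 1 := ⟨i - 1, by omega⟩
    · exact h₁
    · exact hlt (j + 1) (by omega) (by omega)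
  · rintro ⟨hlt, hB⟩
    exact ⟨⟨fun i _ hi => hlt (i + 1) (by omega) (by omega), hB⟩, hlt 1 le_rfl (by omega)⟩

lemma notMem_noReturn_iff {E : Set X} {ω : ℕ → X} :
    ω ∉ noReturn E ↔ {n | 1 ≤ n ∧ ω n ∈ E}.Nonempty := by
  simp [noReturn, Set.Nonempty]

lemma hitTime_of_mem_noReturn {E : Set X} {ω : ℕ → X} (h : ω ∈ noReturn E) :
    hitTime E ω = 0 := by
  rw [hitTime, Nat.sInf_eq_zero]
  exact .inr (eq_empty_of_forall_notMem fun n hn => h n hn.1 hn.2)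

lemma hitTime_eq_of_mem_tabooSet {E B : Set X} (hBE : B ⊆ E) {n : ℕ} (hn : 1 ≤ n)
    {ω : ℕ → X} (h : ω ∈ tabooSet E B n) : hitTime E ω = n := by
  have hmem : n ∈ {n | 1 ≤ n ∧ ω n ∈ E} := ⟨hn, hBE h.2⟩
  refine le_antisymm (Nat.sInf_le hmem) (not_lt.1 fun hlt => ?_)
  obtain ⟨h₁, hE⟩ := Nat.sInf_mem ⟨n, hmem⟩
  exact h.1 _ h₁ hlt hE

lemma mem_firstEntrance_iff {E B : Set X} (hBE : B ⊆ E) {ω : ℕ → X} :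
    ω ∈ firstEntrance E B ↔ ω ∉ noReturn E ∧ ω (hitTime E ω) ∈ B := by
  constructor
  · rintro ⟨_, ⟨n, rfl⟩, h⟩
    rw [hitTime_eq_of_mem_tabooSet hBE n.succ_pos h]
    exact ⟨fun hno => hno (n + 1) n.succ_pos (hBE h.2), h.2⟩
  · rintro ⟨hret, hB⟩
    have h₁ : 1 ≤ hitTime E ω := (Nat.sInf_mem (notMem_noReturn_iff.1 hret)).1
    refine mem_iUnion.2 ⟨hitTime E ω - 1, fun i hi hlt hE => ?_, by rwa [Nat.sub_add_cancel h₁]⟩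
    have : hitTime E ω ≤ i := Nat.sInf_le ⟨hi, hE⟩
    omega

lemma firstEntrance_union_noReturn (E : Set X) : firstEntrance E E ∪ noReturn E = univ := by
  refine eq_univ_of_forall fun ω => or_iff_not_imp_right.2 fun hret => ?_
  exact (mem_firstEntrance_iff subset_rfl).2 ⟨hret, (Nat.sInf_mem (notMem_noReturn_iff.1 hret)).2⟩

lemma setOf_hitTime_mem {E B : Set X} (hBE : B ⊆ E) :
    {ω | ω (hitTime E ω) ∈ B} = firstEntrance E B ∪ (noReturn E ∩ {ω | ω 0 ∈ B}) := by
  ext ω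
  by_cases hret : ω ∈ noReturn E
  · simp [mem_firstEntrance_iff hBE, hret, hitTime_of_mem_noReturn hret]
  · simp [mem_firstEntrance_iff hBE, hret]

lemma pairwise_disjoint_tabooSet {E B : Set X} (hBE : B ⊆ E) :
    Pairwise (Function.onFun Disjoint fun n => tabooSet E B (n + 1)) := fun i j hij =>
  disjoint_left.2 fun _ hi hj => hij <| Nat.succ_injective <|
    (hitTime_eq_of_mem_tabooSet hBE i.succ_pos hi).symm.trans
      (hitTime_eq_of_mem_tabooSet hBE j.succ_pos hj)

variable [MeasurableSpace X]

lemma measurableSet_eval_mem {B : Set X} (hB : MeasurableSet B) (n : ℕ) :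
    MeasurableSet {ω : ℕ → X | ω n ∈ B} :=
  hB.preimage (measurable_pi_apply n)

lemma measure_setOf_eval_mem {Q : Measure (ℕ → X)} {μ : Measure X} {n : ℕ}
    (hQ : Q.map (fun ω => ω n) = μ) {B : Set X} (hB : MeasurableSet B) :
    Q {ω | ω n ∈ B} = μ B := by
  rw [← hQ, Measure.map_apply (measurable_pi_apply n) hB]
  rfl

lemma measurable_shift : Measurable (shift : (ℕ → X) → ℕ → X) :=
  measurable_pi_lambda _ fun n => measurable_pi_apply (n + 1)

lemma measurableSet_noReturn {E : Set X} (hE : MeasurableSet E) :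
    MeasurableSet (noReturn E) := by
  simp only [noReturn, ofPred_forall]
  exact .iInter fun n => .iInter fun _ => hE.compl.preimage (measurable_pi_apply n)

lemma measurableSet_tabooSet {E B : Set X} (hE : MeasurableSet E) (hB : MeasurableSet B)
    (n : ℕ) : MeasurableSet (tabooSet E B n) := by
  simp only [tabooSet, ofPred_and, ofPred_forall]
  exact .inter (.iInter fun i => .iInter fun _ => .iInter fun _ =>
    hE.compl.preimage (measurable_pi_apply i)) (hB.preimage (measurable_pi_apply n))

lemma measurableSet_firstEntrance {E B : Set X} (hE : MeasurableSet E) (hB : MeasurableSet B) :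
    MeasurableSet (firstEntrance E B) :=
  .iUnion fun n => measurableSet_tabooSet hE hB (n + 1)

section Stationary

variable {Q : Measure (ℕ → X)} {E B : Set X}

lemma measure_shift_preimage (hQ : Q.map shift = Q) {s : Set (ℕ → X)} (hs : MeasurableSet s) :
    Q (shift ⁻¹' s) = Q s := by
  rw [← Measure.map_apply measurable_shift hs, hQ]

lemma measure_eval_zero_eq_sum_add (hQ : Q.map shift = Q) (hE : MeasurableSet E)
    (hB : MeasurableSet B) (N : ℕ) :
    Q {ω | ω 0 ∈ B} = ∑ n ∈ Finset.range N, Q (tabooSet E B (n + 1) ∩ {ω | ω 0 ∈ E})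
      + Q (tabooSet E B (N + 1)) := by
  induction N with
  | zero =>
    rw [Finset.sum_range_zero, zero_add, ← shift_preimage_eval_zero E,
      measure_shift_preimage hQ (measurableSet_eval_mem hB 0)]
  | succ N ih =>
    rw [ih, Finset.sum_range_succ, add_assoc,
      ← measure_inter_add_sdiff (tabooSet E B (N + 1)) (measurableSet_eval_mem hE 0),
      ← shift_preimage_tabooSet_diff,
      measure_shift_preimage hQ
        ((measurableSet_tabooSet hE hB _).diff (measurableSet_eval_mem hE 0))]

lemma measure_firstEntrance_inter (hE : MeasurableSet E) (hB : MeasurableSet B) (hBE : B ⊆ E) :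
    Q (firstEntrance E B ∩ {ω | ω 0 ∈ E}) =
      ∑' n, Q (tabooSet E B (n + 1) ∩ {ω | ω 0 ∈ E}) := by
  rw [firstEntrance, iUnion_inter]
  exact measure_iUnion ((pairwise_disjoint_tabooSet hBE).mono fun _ _ h =>
      h.mono inter_subset_left inter_subset_left)
    fun n => (measurableSet_tabooSet hE hB _).inter (measurableSet_eval_mem hE 0)

lemma measure_eval_zero_eq_tsum (hB : MeasurableSet B)
    (hrec : Q (noReturn B ∩ {ω | ω 0 ∈ B}) = 0) :
    Q {ω | ω 0 ∈ B} = ∑' n, Q (tabooSet B B (n + 1) ∩ {ω | ω 0 ∈ B}) := by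
  rw [← measure_firstEntrance_inter hB hB subset_rfl]
  conv_lhs => rw [← univ_inter {ω : ℕ → X | ω 0 ∈ B}, ← firstEntrance_union_noReturn B,
    union_inter_distrib_right]
  exact measure_congr (union_ae_eq_left_of_ae_eq_empty (ae_eq_empty.mpr hrec))

lemma tendsto_measure_tabooSet_self (hQ : Q.map shift = Q) (hB : MeasurableSet B)
    (hfin : Q {ω | ω 0 ∈ B} ≠ ∞) (hrec : Q (noReturn B ∩ {ω | ω 0 ∈ B}) = 0) :
    Tendsto (fun N => Q (tabooSet B B (N + 1))) atTop (𝓝 0) := by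
  have hsum := ENNReal.summable.hasSum_iff.2 (measure_eval_zero_eq_tsum hB hrec).symm
  have hrem : ∀ N, Q (tabooSet B B (N + 1)) = Q {ω | ω 0 ∈ B} -
      ∑ n ∈ Finset.range N, Q (tabooSet B B (n + 1) ∩ {ω | ω 0 ∈ B}) := fun N => by
    have h := measure_eval_zero_eq_sum_add hQ hB hB N
    rw [h, ENNReal.add_sub_cancel_left]
    exact ne_top_of_le_ne_top hfin (h ▸ le_self_add)
  simpa [hrem] using ENNReal.Tendsto.sub tendsto_const_nhds hsum.tendsto_sum_nat (.inl hfin)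

lemma measure_eval_zero_eq_firstEntrance_of_ne_top (hQ : Q.map shift = Q)
    (hE : MeasurableSet E) (hB : MeasurableSet B) (hBE : B ⊆ E) (hfin : Q {ω | ω 0 ∈ B} ≠ ∞)
    (hrec : Q (noReturn B ∩ {ω | ω 0 ∈ B}) = 0) :
    Q {ω | ω 0 ∈ B} = Q (firstEntrance E B ∩ {ω | ω 0 ∈ E}) := by
  rw [measure_firstEntrance_inter hE hB hBE]
  have hrem : Tendsto (fun N => Q (tabooSet E B (N + 1))) atTop (𝓝 0) :=
    tendsto_of_tendsto_of_tendsto_of_le_of_le tendsto_const_nhds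
      (tendsto_measure_tabooSet_self hQ hB hfin hrec) (fun _ => zero_le)
      fun N => measure_mono (tabooSet_anti B hBE (N + 1))
  have hsum : Summable fun n => Q (tabooSet E B (n + 1) ∩ {ω | ω 0 ∈ E}) := ENNReal.summable
  have hlim := hsum.hasSum.tendsto_sum_nat.add hrem
  rw [add_zero] at hlim
  exact tendsto_nhds_unique
    (tendsto_const_nhds.congr fun N => measure_eval_zero_eq_sum_add hQ hE hB N) hlim

theorem measure_eq_measure_firstEntrance {μ : Measure X} [SigmaFinite μ]
    (hQ : Q.map shift = Q) (hQ₀ : Q.map (fun ω => ω 0) = μ)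
    (hrec : ∀ B, MeasurableSet B → Q (noReturn B ∩ {ω | ω 0 ∈ B}) = 0)
    (hE : MeasurableSet E) (hB : MeasurableSet B) (hBE : B ⊆ E) :
    μ B = Q (firstEntrance E B ∩ {ω | ω 0 ∈ E}) := by
  set C : ℕ → Set X := fun k => B ∩ spanningSets μ k
  have hC : ∀ k, MeasurableSet (C k) := fun k => hB.inter (measurableSet_spanningSets μ k)
  have hCmono : Monotone C := fun _ _ h => inter_subset_inter_right B (monotone_spanningSets μ h)
  have hCB : ⋃ k, C k = B := by rw [← inter_iUnion, iUnion_spanningSets, inter_univ]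
  have hCeq : ∀ k, μ (C k) = Q (firstEntrance E (C k) ∩ {ω | ω 0 ∈ E}) := fun k => by
    rw [← measure_setOf_eval_mem hQ₀ (hC k)]
    refine measure_eval_zero_eq_firstEntrance_of_ne_top hQ hE (hC k)
      (inter_subset_left.trans hBE) ?_ (hrec _ (hC k))
    rw [measure_setOf_eval_mem hQ₀ (hC k)]
    exact (measure_mono inter_subset_right).trans_lt (measure_spanningSets_lt_top μ k) |>.ne
  have hlhs := tendsto_measure_iUnion_atTop (μ := μ) hCmono
  have hrhs := tendsto_measure_iUnion_atTop (μ := Q)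
    (s := fun k => firstEntrance E (C k) ∩ {ω | ω 0 ∈ E})
    fun _ _ h => inter_subset_inter_left _ (firstEntrance_mono E (hCmono h))
  rw [← iUnion_inter, ← firstEntrance_iUnion, hCB] at hrhs
  rw [hCB] at hlhs
  exact tendsto_nhds_unique hlhs (hrhs.congr fun k => (hCeq k).symm)

end Stationary

section PathLaws

variable {P : X → Measure (ℕ → X)} {μ : Measure X}

lemma measure_inter_eval_zero_mem (hP₀ : ∀ x, (P x).map (fun ω => ω 0) = Measure.dirac x)
    {E : Set X} (hE : MeasurableSet E) (S : Set (ℕ → X)) (x : X) :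
    P x (S ∩ {ω | ω 0 ∈ E}) = E.indicator (fun x => P x S) x := by
  have hP₀E : ∀ C, MeasurableSet C → P x {ω | ω 0 ∈ C} = C.indicator 1 x := fun C hC => by
    rw [measure_setOf_eval_mem (hP₀ x) hC, Measure.dirac_apply' x hC]
  by_cases hx : x ∈ E
  · rw [indicator_of_mem hx, measure_inter_conull]
    change P x {ω | ω 0 ∈ Eᶜ} = 0
    rw [hP₀E _ hE.compl, indicator_of_notMem (notMem_compl_iff.2 hx)]
  · rw [indicator_of_notMem hx]
    exact measure_mono_null inter_subset_right (by rw [hP₀E _ hE, indicator_of_notMem hx])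

lemma restrict_bind_apply (hP : Measurable P)
    (hP₀ : ∀ x, (P x).map (fun ω => ω 0) = Measure.dirac x) {E : Set X} (hE : MeasurableSet E)
    {S : Set (ℕ → X)} (hS : MeasurableSet S) :
    (μ.restrict E).bind P S = μ.bind P (S ∩ {ω | ω 0 ∈ E}) := by
  rw [Measure.bind_apply hS hP.aemeasurable,
    Measure.bind_apply (hS.inter (measurableSet_eval_mem hE 0)) hP.aemeasurable,
    ← lintegral_indicator hE]
  simp_rw [measure_inter_eval_zero_mem hP₀ hE]

lemma bind_map_eval_zero (hP : Measurable P)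
    (hP₀ : ∀ x, (P x).map (fun ω => ω 0) = Measure.dirac x) :
    (μ.bind P).map (fun ω => ω 0) = μ := by
  rw [Measure.map_bind μ hP (measurable_pi_apply 0), funext hP₀, Measure.bind_dirac]

lemma bind_map_shift (hP : Measurable P)
    (hPstep : ∀ x, (P x).map shift = ((P x).map (fun ω => ω 1)).bind P)
    (hinv : (μ.bind P).map (fun ω => ω 1) = μ) :
    (μ.bind P).map shift = μ.bind P := by
  have hP₁ : Measurable fun x => (P x).map (fun ω => ω 1) :=
    (Measure.measurable_map _ (measurable_pi_apply 1)).comp hP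
  rw [Measure.map_bind μ hP measurable_shift, funext hPstep,
    ← Measure.bind_bind hP₁.aemeasurable hP.aemeasurable,
    ← Measure.map_bind μ hP (measurable_pi_apply 1), hinv]

lemma bind_noReturn_inter_eval_zero (hP : Measurable P)
    (hP₀ : ∀ x, (P x).map (fun ω => ω 0) = Measure.dirac x)
    (hrecur : ∀ B : Set X, MeasurableSet B → 0 < μ B →
      ((μ.restrict B).bind P) {ω | ∀ n, 1 ≤ n → ω n ∉ B} = 0)
    {B : Set X} (hB : MeasurableSet B) :
    μ.bind P (noReturn B ∩ {ω | ω 0 ∈ B}) = 0 := by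
  rcases eq_zero_or_pos (μ B) with hμB | hμB
  · refine measure_mono_null inter_subset_right ?_
    rw [measure_setOf_eval_mem (bind_map_eval_zero hP hP₀) hB, hμB]
  · rw [← restrict_bind_apply hP hP₀ hB (measurableSet_noReturn hB)]
    exact hrecur B hB hμB

end PathLaws

end InducedChain

open InducedChain

theorem stmt9_general {X : Type*} [MeasurableSpace X]
    (P : X → Measure (ℕ → X)) (hPmeas : Measurable P)
    (hP0 : ∀ x, (P x).map (fun ω => ω 0) = Measure.dirac x)
    (hPstep : ∀ x, (P x).map (fun ω n => ω (n + 1)) = ((P x).map (fun ω => ω 1)).bind P)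
    (μ : Measure X) [SigmaFinite μ]
    (hinv : Measure.map (fun ω => ω 1) (μ.bind P) = μ)
    (hrecur : ∀ B : Set X, MeasurableSet B → 0 < μ B →
      ((μ.restrict B).bind P) {ω | ∀ n, 1 ≤ n → ω n ∉ B} = 0)
    (A : Set X) (hA : MeasurableSet A) :
    ∀ B : Set X, MeasurableSet B → B ⊆ A →
      μ B = ∫⁻ x in A, (P x) {ω | ω (hitTime A ω) ∈ B} ∂μ := by
  intro B hB hBA
  have hrec : ∀ C, MeasurableSet C → μ.bind P (noReturn C ∩ {ω | ω 0 ∈ C}) = 0 :=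
    fun C hC => bind_noReturn_inter_eval_zero hPmeas hP0 hrecur hC
  have hnull : (μ.restrict A).bind P (noReturn A ∩ {ω | ω 0 ∈ B}) = 0 := by
    refine measure_mono_null inter_subset_left ?_
    rw [restrict_bind_apply hPmeas hP0 hA (measurableSet_noReturn hA)]
    exact hrec A hA
  rw [setOf_hitTime_mem hBA]
  calc μ B = μ.bind P (firstEntrance A B ∩ {ω | ω 0 ∈ A}) :=
        measure_eq_measure_firstEntrance (bind_map_shift hPmeas hPstep hinv)
          (bind_map_eval_zero hPmeas hP0) hrec hA hB hBA
    _ = (μ.restrict A).bind P (firstEntrance A B) :=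
        (restrict_bind_apply hPmeas hP0 hA (measurableSet_firstEntrance hA hB)).symm
    _ = (μ.restrict A).bind P (firstEntrance A B ∪ (noReturn A ∩ {ω | ω 0 ∈ B})) :=
        (measure_congr (union_ae_eq_left_of_ae_eq_empty (ae_eq_empty.2 hnull))).symm
    _ = ∫⁻ x in A, P x (firstEntrance A B ∪ (noReturn A ∩ {ω | ω 0 ∈ B})) ∂μ :=
        Measure.bind_apply ((measurableSet_firstEntrance hA hB).union
          ((measurableSet_noReturn hA).inter (measurableSet_eval_mem hB 0))) hPmeas.aemeasurable

/-- Let `Y` be a Markov chain on a topological space `X`, given by its family `P` of path-space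
laws (`P x` is the law of the chain started at `x`; `hP0` and `hPstep` encode the
time-homogeneous Markov property). If `Y` has a σ-finite invariant Borel measure `μ`, is
recurrent starting under `μ`, and `A` is Borel with `μ A > 0`, then `μ|_A` is an invariant
measure for the Markov chain induced on `A` (sampling `Y` at its successive visits to `A`). -/
theorem stmt9 {X : Type*} [TopologicalSpace X] [MeasurableSpace X] [BorelSpace X]
    (P : X → Measure (ℕ → X)) (hPmeas : Measurable P)
    (hPprob : ∀ x, IsProbabilityMeasure (P x))
    (hP0 : ∀ x, (P x).map (fun ω => ω 0) = Measure.dirac x)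
    (hPstep : ∀ x, (P x).map (fun ω n => ω (n + 1)) = ((P x).map (fun ω => ω 1)).bind P)
    (μ : Measure X) [SigmaFinite μ]
    (hinv : Measure.map (fun ω => ω 1) (μ.bind P) = μ)
    (hrecur : ∀ B : Set X, MeasurableSet B → 0 < μ B →
      ((μ.restrict B).bind P) {ω | ∀ n, 1 ≤ n → ω n ∉ B} = 0)
    (A : Set X) (hA : MeasurableSet A) (hApos : 0 < μ A) :
    ∀ B : Set X, MeasurableSet B → B ⊆ A →
      μ B = ∫⁻ x in A, (P x) {ω | ω (hitTime A ω) ∈ B} ∂μ :=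
  stmt9_general P hPmeas hP0 hPstep μ hinv hrecur A hA
end

section
/- Let Y be a Markov chain on a topological space X, recurrent starting under a σ-finite invariant Borel measure μ, and let A be a Borel set with P_{μ|_{A^c}}(Y_1 ∈ A) > 0. Then the measure μ_A^{entr}(B) := ∫_{A^c} P_x(Y_1 ∈ B) μ(dx) (for Borel B ⊂ A) is an invariant measure for the entrance Markov chain Y^{→A} obtained by sampling Y at the moments it enters A from A^c. -/
/-!
Let `Q = P_μ` be the law of the stationary chain (σ-finite and invariant under the shift `θ`) and
`F_M` the event that the first entrance into `A` happens at time `M + 1` and lands in `B`. Started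
from `μ_A^{entr}`, the chain is `Q` restricted to the paths entering `A` at time `1`, seen from time
`1` on. So the left side is `Q(F_0)` and, recurrence discarding the paths without a further
entrance, the right side is `∑ₘ Q(entrance at time 1 ∩ θ⁻¹ F_m)`. Splitting `θ⁻¹ F_M` according to
an entrance at time `1` gives `Q(F_M) = Q(F_{M+1}) + Q(entrance at time 1 ∩ θ⁻¹ F_M)`, so it remains
to see `Q(F_M) → 0` when `μ B < ∞` (σ-finiteness does the rest). By recurrence a path in `F_M`
visits `B` at least `k` times shortly after time `M + 1`, up to a set of small measure; shifting
these visits to a common time, where the events `F_i` are disjoint and carry total mass at most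
`μ B`, Markov's inequality gives `lim Q(F_M) ≤ μ B / k` for every `k`.
-/

open MeasureTheory Set
open scoped ENNReal

/-- First entrance time (at time ≥ 1) of a path `ω` into `A` from `Aᶜ`
(`0` if no such entrance occurs). -/
noncomputable def entrTime {X : Type*} (A : Set X) (ω : ℕ → X) : ℕ :=
  sInf {k | 1 ≤ k ∧ ω (k - 1) ∉ A ∧ ω k ∈ A}

open Filter Topology
open scoped Finset

namespace MeasureTheory.Measure

variable {α β γ : Type*} [MeasurableSpace α] [MeasurableSpace β] [MeasurableSpace γ]

theorem map_bind_s10 (m : Measure α) {f : α → Measure β} (hf : Measurable f) {g : β → γ}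
    (hg : Measurable g) : (m.bind f).map g = m.bind fun a => (f a).map g := by
  rw [bind, ← join_map_map hg, map_map (measurable_map g hg) hf]
  rfl

theorem ext_of_measure_lt_top (μ : Measure α) [SigmaFinite μ] {m₁ m₂ : Measure α}
    (h : ∀ s, MeasurableSet s → μ s < ∞ → m₁ s = m₂ s) : m₁ = m₂ := by
  refine (ext_iff_of_iUnion_eq_univ (iUnion_spanningSets μ)).2 fun i => ?_
  ext s hs
  rw [restrict_apply hs, restrict_apply hs]
  exact h _ (hs.inter (measurableSet_spanningSets μ i))
    ((measure_mono inter_subset_right).trans_lt (measure_spanningSets_lt_top μ i))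

open scoped Classical in
theorem natCast_mul_measure_inter_le_sum {ι : Type*} (m : Measure α) (E : Set α)
    (s : Finset ι) {W : ι → Set α} (hW : ∀ i, MeasurableSet (W i)) (k : ℕ) :
    (k : ℝ≥0∞) * m (E ∩ {a | k ≤ #{i ∈ s | a ∈ W i}}) ≤ ∑ i ∈ s, m (E ∩ W i) := by
  have hcount : ∀ a, (#{i ∈ s | a ∈ W i} : ℝ≥0∞) = ∑ i ∈ s, (W i).indicator 1 a := fun a => by
    simp only [Finset.card_filter, Nat.cast_sum, Nat.cast_ite, Nat.cast_one, Nat.cast_zero,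
      Set.indicator_apply, Pi.one_apply]
  calc (k : ℝ≥0∞) * m (E ∩ {a | k ≤ #{i ∈ s | a ∈ W i}})
      ≤ k * m.restrict E {a | (k : ℝ≥0∞) ≤ #{i ∈ s | a ∈ W i}} := by
        simp only [Nat.cast_le]
        rw [inter_comm]
        exact mul_le_mul_right (le_restrict_apply E _) _
    _ ≤ ∫⁻ a, (#{i ∈ s | a ∈ W i} : ℝ≥0∞) ∂m.restrict E := by
        refine mul_meas_ge_le_lintegral₀ ?_ _
        simp_rw [hcount]
        exact (Finset.measurable_sum _ fun i _ => measurable_one.indicator (hW i)).aemeasurable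
    _ = ∑ i ∈ s, m (E ∩ W i) := by
        simp_rw [hcount]
        rw [lintegral_finsetSum _ fun i _ => measurable_one.indicator (hW i)]
        simp_rw [lintegral_indicator_one (hW _), restrict_apply (hW _), inter_comm]

end MeasureTheory.Measure

theorem Nat.frequently_atTop_of_forall_exists_gt {p : ℕ → Prop}
    (h : ∀ j, p j → ∃ n, j < n ∧ p n) {j : ℕ} (hj : p j) : ∃ᶠ n in atTop, p n := by
  refine frequently_atTop.2 fun a => ?_
  induction a with
  | zero => exact ⟨j, j.zero_le, hj⟩
  | succ a ih =>
    obtain ⟨b, hab, hb⟩ := ih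
    obtain ⟨n, hbn, hn⟩ := h b hb
    exact ⟨n, by omega, hn⟩

namespace PathSpace

variable {X : Type*}

def shift (n : ℕ) (ω : ℕ → X) : ℕ → X := fun m => ω (m + n)

theorem shift_add (m n : ℕ) : shift (X := X) (m + n) = shift n ∘ shift m := by
  funext ω k
  simp only [shift, Function.comp, Nat.add_assoc, Nat.add_comm n m]

-- an entrance at time `k + 1` in the indexing of `entrTime`
def EntersAt (A : Set X) (ω : ℕ → X) (k : ℕ) : Prop := ω k ∉ A ∧ ω (k + 1) ∈ A

def firstEntranceInto (A B : Set X) (M : ℕ) : Set (ℕ → X) :=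
  {ω | (∀ k < M, ¬EntersAt A ω k) ∧ EntersAt A ω M ∧ ω (M + 1) ∈ B}

-- For `Q = ρ.bind P`, this is the chain started from the entrance measure of `ρ`
-- (`bind_entranceMeasure_eq_afterEntrance`).
noncomputable def afterEntrance [MeasurableSpace X] (Q : Measure (ℕ → X)) (A : Set X) :
    Measure (ℕ → X) :=
  (Q.restrict {ω | EntersAt A ω 0}).map (shift 1)

open scoped Classical in
noncomputable def visits (B : Set X) (R : ℕ) (ω : ℕ → X) : ℕ := #{i ∈ Finset.range R | ω i ∈ B}

variable {A B : Set X} {ω : ℕ → X}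

theorem entersAt_shift {n k : ℕ} : EntersAt A (shift n ω) k ↔ EntersAt A ω (k + n) := by
  simp only [EntersAt, shift, Nat.add_right_comm k 1 n]

theorem exists_entersAt_of_lt {i j : ℕ} (hi : ω i ∉ A) (hj : ω j ∈ A) (hij : i < j) :
    ∃ k, i ≤ k ∧ k < j ∧ EntersAt A ω k := by
  induction j, hij using Nat.le_induction with
  | base => exact ⟨i, le_rfl, i.lt_succ_self, hi, hj⟩
  | succ j hij ih =>
    by_cases hjA : ω j ∈ A
    · obtain ⟨k, hik, hkj, hk⟩ := ih hjA
      exact ⟨k, hik, hkj.trans j.lt_succ_self, hk⟩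
    · exact ⟨j, by omega, j.lt_succ_self, hjA, hj⟩

theorem entrTime_eq_succ {M : ℕ} (hlt : ∀ k < M, ¬EntersAt A ω k) (hM : EntersAt A ω M) :
    entrTime A ω = M + 1 := by
  refine IsLeast.csInf_eq ⟨⟨M.succ_pos, hM⟩, fun k ⟨hk, hkA⟩ => ?_⟩
  by_contra! hkM
  exact hlt (k - 1) (by omega) ⟨hkA.1, by rw [Nat.sub_add_cancel hk]; exact hkA.2⟩

theorem setOf_apply_entrTime_mem (A B : Set X) :
    {ω : ℕ → X | ω (entrTime A ω) ∈ B} =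
      (⋃ M, firstEntranceInto A B M) ∪ {ω | (∀ k, ¬EntersAt A ω k) ∧ ω 0 ∈ B} := by
  classical
  ext ω
  simp only [mem_ofPred_eq, mem_union, mem_iUnion, firstEntranceInto]
  by_cases h : ∃ k, EntersAt A ω k
  · have hτ := entrTime_eq_succ (fun k hk => Nat.find_min h hk) (Nat.find_spec h)
    refine ⟨fun hB => Or.inl ⟨Nat.find h, fun k hk => Nat.find_min h hk, Nat.find_spec h,
      hτ ▸ hB⟩, ?_⟩
    rintro (⟨M, hlt, hM, hB⟩ | ⟨hno, -⟩)
    · rwa [entrTime_eq_succ hlt hM]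
    · exact absurd h (not_exists.2 hno)
  · have hτ : entrTime A ω = 0 := by
      refine Nat.sInf_eq_zero.2 (Or.inr (eq_empty_of_forall_notMem fun k ⟨hk, hkA⟩ => h ?_))
      exact ⟨k - 1, hkA.1, by rw [Nat.sub_add_cancel hk]; exact hkA.2⟩
    push Not at h
    simp [hτ, h]

theorem pairwise_disjoint_firstEntranceInto (A B : Set X) :
    Pairwise (Function.onFun Disjoint (firstEntranceInto A B)) :=
  (pairwise_disjoint_on _).2 fun _ _ hMN =>
    disjoint_left.2 fun _ hM hN => hN.1 _ hMN hM.2.1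

theorem firstEntranceInto_add_subset (M n : ℕ) :
    firstEntranceInto A B (M + n) ⊆ shift n ⁻¹' firstEntranceInto A B M := by
  rintro ω ⟨hlt, hM, hB⟩
  refine ⟨fun k hk => entersAt_shift.not.2 (hlt _ (by omega)), entersAt_shift.2 hM, ?_⟩
  simpa only [shift, Nat.add_right_comm M 1 n] using hB

theorem preimage_shift_one_firstEntranceInto_diff (M : ℕ) :
    shift 1 ⁻¹' firstEntranceInto A B M \ {ω | EntersAt A ω 0} = firstEntranceInto A B (M + 1) := by
  ext ω
  simp only [firstEntranceInto, Set.mem_sdiff, mem_ofPred_eq]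
  constructor
  · rintro ⟨⟨hlt, hM, hB⟩, h0⟩
    refine ⟨fun k hk => ?_, hM, hB⟩
    rcases k with _ | k
    · exact h0
    · exact hlt k (by omega)
  · rintro ⟨hlt, hM, hB⟩
    exact ⟨⟨fun k hk => hlt _ (by omega), hM, hB⟩, hlt 0 (by omega)⟩

theorem exists_le_visits_of_frequently (h : ∃ᶠ n in atTop, ω n ∈ B) (k : ℕ) :
    ∃ R, k ≤ visits B R ω := by
  classical
  obtain ⟨t, hts, rfl⟩ := (Nat.frequently_atTop_iff_infinite.1 h).exists_subset_card_eq k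
  refine ⟨t.sup id + 1, ?_⟩
  unfold visits
  refine Finset.card_le_card fun i hi => ?_
  simp only [Finset.mem_filter, Finset.mem_range]
  exact ⟨Nat.lt_succ_of_le (Finset.le_sup (f := id) hi), hts hi⟩

open scoped Classical in
theorem visits_mono {R R' : ℕ} (h : R ≤ R') : visits B R ω ≤ visits B R' ω :=
  Finset.card_le_card (Finset.filter_subset_filter _ (Finset.range_subset_range.2 h))

variable [MeasurableSpace X]

theorem measurable_visits (hB : MeasurableSet B) (R : ℕ) : Measurable (visits B R) := by
  unfold visits
  simp_rw [Finset.card_filter]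
  exact Finset.measurable_sum _ fun i _ =>
    Measurable.ite (measurable_pi_apply i hB) measurable_const measurable_const

@[fun_prop]
theorem measurable_shift (n : ℕ) : Measurable (shift (X := X) n) :=
  measurable_pi_lambda _ fun m => measurable_pi_apply (m + n)

theorem measurableSet_eval_mem (n : ℕ) {C : Set X} (hC : MeasurableSet C) :
    MeasurableSet {ω : ℕ → X | ω n ∈ C} :=
  measurable_pi_apply n hC

theorem measurableSet_setOf_entersAt (hA : MeasurableSet A) (k : ℕ) :
    MeasurableSet {ω : ℕ → X | EntersAt A ω k} :=
  (measurableSet_eval_mem k hA.compl).inter (measurableSet_eval_mem (k + 1) hA)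

theorem measurableSet_firstEntranceInto (hA : MeasurableSet A) (hB : MeasurableSet B) (M : ℕ) :
    MeasurableSet (firstEntranceInto A B M) := by
  simp only [firstEntranceInto, ofPred_and, ofPred_forall]
  exact (MeasurableSet.iInter fun k => MeasurableSet.iInter fun _ =>
    (measurableSet_setOf_entersAt hA k).compl).inter
      ((measurableSet_setOf_entersAt hA M).inter (measurableSet_eval_mem _ hB))

theorem measurable_apply_entrTime (hA : MeasurableSet A) :
    Measurable fun ω : ℕ → X => ω (entrTime A ω) := fun B hB => by
  change MeasurableSet {ω : ℕ → X | ω (entrTime A ω) ∈ B}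
  rw [setOf_apply_entrTime_mem, ofPred_and, ofPred_forall]
  exact (MeasurableSet.iUnion fun M => measurableSet_firstEntranceInto hA hB M).union
    ((MeasurableSet.iInter fun k => (measurableSet_setOf_entersAt hA k).compl).inter
      (measurableSet_eval_mem 0 hB))

theorem measure_inter_eval_zero_mem {ν : Measure (ℕ → X)} {x : X}
    (hν : ν.map (fun ω => ω 0) = Measure.dirac x) {C : Set X} (hC : MeasurableSet C)
    (S : Set (ℕ → X)) : ν (S ∩ {ω | ω 0 ∈ C}) = C.indicator (fun _ => ν S) x := by
  have hmass : ∀ D, MeasurableSet D → ν {ω | ω 0 ∈ D} = D.indicator 1 x := fun D hD => by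
    rw [← Measure.dirac_apply' x hD, ← hν, Measure.map_apply (measurable_pi_apply 0) hD]
    rfl
  by_cases hx : x ∈ C
  · rw [indicator_of_mem hx]
    refine measure_congr (inter_ae_eq_left_of_ae_eq_univ (ae_eq_univ.mpr ?_))
    have h := hmass Cᶜ hC.compl
    rwa [indicator_of_notMem (notMem_compl_iff.mpr hx)] at h
  · rw [indicator_of_notMem hx]
    exact measure_mono_null inter_subset_right (by simpa [hx] using hmass C hC)

structure IsMarkovFamily (P : X → Measure (ℕ → X)) : Prop where
  measurable : Measurable P
  map_eval_zero (x : X) : (P x).map (fun ω => ω 0) = Measure.dirac x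
  map_shift (x : X) : (P x).map (fun ω n => ω (n + 1)) = ((P x).map (fun ω => ω 1)).bind P

variable {P : X → Measure (ℕ → X)} (hP : IsMarkovFamily P)

section InitialLaw

variable (ρ : Measure X)
include hP

theorem map_eval_zero_bind : (ρ.bind P).map (fun ω => ω 0) = ρ := by
  rw [Measure.map_bind_s10 ρ hP.measurable (measurable_pi_apply 0)]
  simp_rw [hP.map_eval_zero]
  exact Measure.bind_dirac

theorem map_shift_bind : (ρ.bind P).map (shift 1) = ((ρ.bind P).map (fun ω => ω 1)).bind P := by
  have hev : Measurable fun x => (P x).map (fun ω : ℕ → X => ω 1) :=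
    (Measure.measurable_map _ (measurable_pi_apply 1)).comp hP.measurable
  rw [Measure.map_bind_s10 ρ hP.measurable (measurable_shift 1), Measure.map_bind_s10 ρ hP.measurable
    (measurable_pi_apply 1), Measure.bind_bind hev.aemeasurable hP.measurable.aemeasurable]
  exact congrArg ρ.bind (funext hP.map_shift)

theorem bind_restrict {C : Set X} (hC : MeasurableSet C) :
    (ρ.restrict C).bind P = (ρ.bind P).restrict {ω | ω 0 ∈ C} := by
  ext S hS
  rw [Measure.bind_apply hS hP.measurable.aemeasurable, Measure.restrict_apply hS,
    Measure.bind_apply (hS.inter (measurableSet_eval_mem 0 hC)) hP.measurable.aemeasurable,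
    ← lintegral_indicator hC]
  exact lintegral_congr fun x => (measure_inter_eval_zero_mem (hP.map_eval_zero x) hC S).symm

theorem bind_entranceMeasure_eq_afterEntrance (hA : MeasurableSet A) :
    ((ρ.restrict Aᶜ).bind P |>.map (fun ω => ω 1) |>.restrict A).bind P =
      afterEntrance (ρ.bind P) A := by
  rw [bind_restrict hP _ hA, ← map_shift_bind hP,
    bind_restrict hP ρ hA.compl,
    Measure.restrict_map (measurable_shift 1) (measurableSet_eval_mem 0 hA),
    Measure.restrict_restrict (measurable_shift 1 (measurableSet_eval_mem 0 hA)), afterEntrance]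
  congr 2
  ext ω
  simp [EntersAt, shift, and_comm]

end InitialLaw

variable {μ : Measure X} (hinv : Measure.map (fun ω => ω 1) (μ.bind P) = μ)
include hP hinv

theorem measurePreserving_shift (n : ℕ) :
    MeasurePreserving (shift n) (μ.bind P) (μ.bind P) := by
  induction n with
  | zero => exact MeasurePreserving.id _
  | succ n ih =>
    rw [shift_add n 1]
    exact .comp ⟨measurable_shift 1, by rw [map_shift_bind hP, hinv]⟩ ih

theorem measure_eval_mem (n : ℕ) {C : Set X} (hC : MeasurableSet C) :
    (μ.bind P) {ω | ω n ∈ C} = μ C := by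
  calc (μ.bind P) {ω | ω n ∈ C} = (μ.bind P) (shift n ⁻¹' {ω | ω 0 ∈ C}) := by
        simp [shift]
    _ = ((μ.bind P).map fun ω => ω 0) C := by
        rw [(measurePreserving_shift hP hinv n).measure_preimage
          (measurableSet_eval_mem 0 hC).nullMeasurableSet,
          Measure.map_apply (measurable_pi_apply 0) hC]
        rfl
    _ = μ C := by rw [map_eval_zero_bind hP]

section Decomposition

variable (hA : MeasurableSet A) (hB : MeasurableSet B)
include hA hB

theorem measure_firstEntranceInto_eq (M : ℕ) :
    (μ.bind P) (firstEntranceInto A B M) = (μ.bind P) (firstEntranceInto A B (M + 1)) +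
      (μ.bind P) (shift 1 ⁻¹' firstEntranceInto A B M ∩ {ω | EntersAt A ω 0}) := by
  rw [← preimage_shift_one_firstEntranceInto_diff, add_comm,
    measure_inter_add_sdiff _ (measurableSet_setOf_entersAt hA 0),
    (measurePreserving_shift hP hinv 1).measure_preimage
      (measurableSet_firstEntranceInto hA hB M).nullMeasurableSet]

theorem measure_firstEntranceInto_zero_eq (M : ℕ) :
    (μ.bind P) (firstEntranceInto A B 0) = (μ.bind P) (firstEntranceInto A B M) +
      ∑ m ∈ Finset.range M,
        (μ.bind P) (shift 1 ⁻¹' firstEntranceInto A B m ∩ {ω | EntersAt A ω 0}) := by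
  induction M with
  | zero => simp
  | succ M ih =>
    rw [ih, Finset.sum_range_succ, measure_firstEntranceInto_eq hP hinv hA hB M]
    ring

theorem sum_measure_firstEntranceInto_inter_le (n t : ℕ) :
    ∑ i ∈ Finset.range n, (μ.bind P) (firstEntranceInto A B i ∩ {ω | ω t ∈ B}) ≤ μ B := by
  rw [← measure_biUnion_finset (fun i _ j _ hij =>
      (pairwise_disjoint_firstEntranceInto A B hij).mono inter_subset_left inter_subset_left)
      fun i _ => (measurableSet_firstEntranceInto hA hB i).inter (measurableSet_eval_mem t hB),
    ← measure_eval_mem hP hinv t hB]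
  exact measure_mono (iUnion₂_subset fun i _ => inter_subset_right)

theorem measure_firstEntranceInto_add_inter_le (M n t : ℕ) :
    (μ.bind P) (firstEntranceInto A B (M + n) ∩ {ω | ω (t + n) ∈ B}) ≤
      (μ.bind P) (firstEntranceInto A B M ∩ {ω | ω t ∈ B}) := by
  have hS := (measurableSet_firstEntranceInto hA hB M).inter (measurableSet_eval_mem t hB)
  rw [← (measurePreserving_shift hP hinv n).measure_preimage hS.nullMeasurableSet]
  exact measure_mono (inter_subset_inter_left _ (firstEntranceInto_add_subset M n))

theorem sum_measure_firstEntranceInto_inter_visit_le (M : ℕ) :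
    ∑ i ∈ Finset.range (M + 1),
      (μ.bind P) (firstEntranceInto A B M ∩ {ω | ω (i + (M + 1)) ∈ B}) ≤ μ B :=
  calc _ ≤ ∑ i ∈ Finset.range (M + 1),
          (μ.bind P) (firstEntranceInto A B (M - i) ∩ {ω | ω (M + 1) ∈ B}) := by
        -- shift the `i`-th event by `i`, so that all the visits happen at time `M + 1`
        refine Finset.sum_le_sum fun i hi => ?_
        have hiM : i ≤ M := Nat.lt_succ_iff.1 (Finset.mem_range.1 hi)
        have h := measure_firstEntranceInto_add_inter_le hP hinv hA hB (M - i) i (M + 1)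
        rwa [Nat.sub_add_cancel hiM, Nat.add_comm (M + 1) i] at h
    _ = ∑ i ∈ Finset.range (M + 1),
          (μ.bind P) (firstEntranceInto A B i ∩ {ω | ω (M + 1) ∈ B}) := by
        simpa only [Nat.add_sub_cancel] using Finset.sum_range_reflect
          (fun i => (μ.bind P) (firstEntranceInto A B i ∩ {ω | ω (M + 1) ∈ B})) (M + 1)
    _ ≤ μ B := sum_measure_firstEntranceInto_inter_le hP hinv hA hB _ _

theorem measure_firstEntranceInto_le (M : ℕ) {k : ℕ} (hk : k ≠ 0) :
    (μ.bind P) (firstEntranceInto A B M) ≤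
      μ B / k + (μ.bind P) {ω | ω 0 ∈ B ∧ visits B (M + 1) ω < k} := by
  set S := {ω | k ≤ visits B (M + 1) (shift (M + 1) ω)}
  have hmany : (μ.bind P) (firstEntranceInto A B M ∩ S) ≤ μ B / k := by
    rw [ENNReal.le_div_iff_mul_le (.inl (Nat.cast_ne_zero.2 hk)) (.inl (ENNReal.natCast_ne_top k)),
      mul_comm]
    exact (Measure.natCast_mul_measure_inter_le_sum _ _ _
      (fun i => measurableSet_eval_mem (i + (M + 1)) hB) k).trans
      (sum_measure_firstEntranceInto_inter_visit_le hP hinv hA hB M)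
  have hfew : MeasurableSet {ω : ℕ → X | ω 0 ∈ B ∧ visits B (M + 1) ω < k} :=
    (measurableSet_eval_mem 0 hB).inter (measurable_visits hB _ measurableSet_Iio)
  calc (μ.bind P) (firstEntranceInto A B M)
      ≤ (μ.bind P) (firstEntranceInto A B M ∩ S ∪
          shift (M + 1) ⁻¹' {ω | ω 0 ∈ B ∧ visits B (M + 1) ω < k}) := by
        refine measure_mono fun ω hω => ?_
        by_cases hS : ω ∈ S
        · exact .inl ⟨hω, hS⟩
        · exact .inr ⟨by simpa [shift] using hω.2.2, not_le.1 hS⟩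
    _ ≤ _ := by
        refine (measure_union_le _ _).trans (add_le_add hmany ?_)
        rw [(measurePreserving_shift hP hinv (M + 1)).measure_preimage hfew.nullMeasurableSet]

end Decomposition

variable (hrec : ∀ B : Set X, MeasurableSet B → 0 < μ B →
      ((μ.restrict B).bind P) {ω | ∀ n, 1 ≤ n → ω n ∉ B} = 0)
include hrec

theorem measure_never_returns_eq_zero {C : Set X} (hC : MeasurableSet C) :
    (μ.bind P) ({ω | ∀ n, 1 ≤ n → ω n ∉ C} ∩ {ω | ω 0 ∈ C}) = 0 := by
  rcases eq_zero_or_pos (μ C) with hC0 | hCpos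
  · exact measure_mono_null inter_subset_right
      (by rw [measure_eval_mem hP hinv 0 hC, hC0])
  · have hT : MeasurableSet {ω : ℕ → X | ∀ n, 1 ≤ n → ω n ∉ C} := by
      simp only [ofPred_forall]
      exact MeasurableSet.iInter fun n => MeasurableSet.iInter fun _ =>
        (measurableSet_eval_mem n hC).compl
    rw [← Measure.restrict_apply hT, ← bind_restrict hP μ hC]
    exact hrec C hC hCpos

theorem ae_frequently_mem {C : Set X} (hC : MeasurableSet C) :
    ∀ᵐ ω ∂(μ.bind P), ∀ j, ω j ∈ C → ∃ᶠ n in atTop, ω n ∈ C := by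
  have hreturn : ∀ j, ∀ᵐ ω ∂(μ.bind P), ω j ∈ C → ∃ n, j < n ∧ ω n ∈ C := fun j => by
    have hnull := measure_never_returns_eq_zero hP hinv hrec hC
    rw [← (measurePreserving_shift hP hinv j).measure_preimage
      (NullMeasurableSet.of_null hnull)] at hnull
    refine ae_iff.2 (measure_mono_null (fun ω hω => ?_) hnull)
    simp only [mem_ofPred_eq] at hω
    push Not at hω
    refine ⟨fun n hn => hω.2 (n + j) (by omega), ?_⟩
    simpa [shift] using hω.1
  filter_upwards [ae_all_iff.2 hreturn] with ω hω j hj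
  exact Nat.frequently_atTop_of_forall_exists_gt hω hj

theorem ae_exists_entersAt_shift (hA : MeasurableSet A) :
    ∀ᵐ ω ∂(μ.bind P), EntersAt A ω 0 → ∃ k, EntersAt A (shift 1 ω) k := by
  filter_upwards [ae_frequently_mem hP hinv hrec hA.compl,
    ae_frequently_mem hP hinv hrec hA] with ω hAc hA ⟨h0, h1⟩
  obtain ⟨i, hi, hiA⟩ := (hAc 0 h0).forall_exists_of_atTop 1
  obtain ⟨j, hj, hjA⟩ := (hA 1 h1).forall_exists_of_atTop (i + 1)
  obtain ⟨k, hik, -, hk⟩ := exists_entersAt_of_lt hiA hjA hj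
  exact ⟨k - 1, entersAt_shift.2 (by rwa [Nat.sub_add_cancel (hi.trans hik)])⟩

theorem tendsto_measure_visits_lt (hB : MeasurableSet B) (hμB : μ B ≠ ∞) (k : ℕ) :
    Tendsto (fun R => (μ.bind P) {ω | ω 0 ∈ B ∧ visits B R ω < k}) atTop (𝓝 0) := by
  have hmeas : ∀ R, MeasurableSet {ω : ℕ → X | ω 0 ∈ B ∧ visits B R ω < k} := fun R =>
    (measurableSet_eval_mem 0 hB).inter (measurable_visits hB R measurableSet_Iio)
  have hnull : (μ.bind P) (⋂ R, {ω | ω 0 ∈ B ∧ visits B R ω < k}) = 0 := by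
    refine measure_eq_zero_iff_ae_notMem.2 ?_
    filter_upwards [ae_frequently_mem hP hinv hrec hB] with ω hω hfew
    simp only [mem_iInter, mem_ofPred_eq] at hfew
    obtain ⟨R, hR⟩ := exists_le_visits_of_frequently (hω 0 (hfew 0).1) k
    exact (hfew R).2.not_ge hR
  rw [← hnull]
  refine tendsto_measure_iInter_atTop (fun R => (hmeas R).nullMeasurableSet)
    (fun R R' hRR' ω hω => ⟨hω.1, (visits_mono hRR').trans_lt hω.2⟩) ⟨0, ?_⟩
  exact ne_top_of_le_ne_top (measure_eval_mem hP hinv 0 hB ▸ hμB)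
    (measure_mono inter_subset_left)

section Limit

variable (hA : MeasurableSet A) (hB : MeasurableSet B)
include hA hB

theorem tendsto_measure_firstEntranceInto (hμB : μ B ≠ ∞) :
    Tendsto (fun M => (μ.bind P) (firstEntranceInto A B M)) atTop (𝓝 0) := by
  have hanti : Antitone fun M => (μ.bind P) (firstEntranceInto A B M) :=
    antitone_nat_of_succ_le fun M => by
      rw [measure_firstEntranceInto_eq hP hinv hA hB M]
      exact le_self_add
  have hlim := tendsto_atTop_iInf hanti
  have hbound (k : ℕ) (hk : k ≠ 0) : ⨅ M, (μ.bind P) (firstEntranceInto A B M) ≤ μ B / k := by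
    have hfew := ((tendsto_measure_visits_lt hP hinv hrec hB hμB k).comp
      (tendsto_add_atTop_nat 1)).const_add (μ B / k)
    rw [add_zero] at hfew
    exact le_of_tendsto_of_tendsto' hlim hfew fun M =>
      measure_firstEntranceInto_le hP hinv hA hB M hk
  have hdiv : Tendsto (fun k : ℕ => μ B / k) atTop (𝓝 0) := by
    simpa [div_eq_mul_inv] using
      ENNReal.Tendsto.const_mul ENNReal.tendsto_inv_nat_nhds_zero (.inr hμB)
  have hzero : ⨅ M, (μ.bind P) (firstEntranceInto A B M) = 0 :=
    le_zero_iff.1 <| ge_of_tendsto hdiv <| eventually_atTop.2 ⟨1, fun k hk => hbound k (by omega)⟩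
  rwa [hzero] at hlim

theorem measure_firstEntranceInto_zero_eq_tsum (hμB : μ B ≠ ∞) :
    (μ.bind P) (firstEntranceInto A B 0) =
      ∑' m, (μ.bind P) (shift 1 ⁻¹' firstEntranceInto A B m ∩ {ω | EntersAt A ω 0}) := by
  have hsum := (tendsto_measure_firstEntranceInto hP hinv hrec hA hB hμB).add
    (ENNReal.tendsto_nat_tsum fun m =>
      (μ.bind P) (shift 1 ⁻¹' firstEntranceInto A B m ∩ {ω | EntersAt A ω 0}))
  rw [zero_add] at hsum
  exact tendsto_nhds_unique (tendsto_const_nhds.congr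
    (measure_firstEntranceInto_zero_eq hP hinv hA hB)) hsum

theorem measure_preimage_shift_entrTime_inter :
    (μ.bind P) (shift 1 ⁻¹' {ω | ω (entrTime A ω) ∈ B} ∩ {ω | EntersAt A ω 0}) =
      ∑' m, (μ.bind P) (shift 1 ⁻¹' firstEntranceInto A B m ∩ {ω | EntersAt A ω 0}) := by
  rw [← measure_iUnion (fun i j hij => ((pairwise_disjoint_firstEntranceInto A B hij).preimage
      (shift 1)).mono inter_subset_left inter_subset_left)
    fun m => (measurable_shift 1 (measurableSet_firstEntranceInto hA hB m)).inter
      (measurableSet_setOf_entersAt hA 0)]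
  refine measure_congr (eventuallyEq_set.2 ?_)
  filter_upwards [ae_exists_entersAt_shift hP hinv hrec hA] with ω hω
  rw [setOf_apply_entrTime_mem]
  simp only [mem_inter_iff, mem_preimage, mem_union, mem_iUnion, mem_ofPred_eq]
  constructor
  · rintro ⟨⟨m, hm⟩ | ⟨hno, -⟩, h0⟩
    · exact ⟨m, hm, h0⟩
    · exact absurd (hω h0) (not_exists.2 hno)
  · rintro ⟨m, hm, h0⟩
    exact ⟨.inl ⟨m, hm⟩, h0⟩

end Limit

theorem map_eval_zero_afterEntrance_eq_map_entrTime [SigmaFinite μ] (hA : MeasurableSet A) :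
    (afterEntrance (μ.bind P) A).map (fun ω => ω 0) =
      (afterEntrance (μ.bind P) A).map (fun ω => ω (entrTime A ω)) := by
  refine Measure.ext_of_measure_lt_top μ fun B hB hμB => ?_
  have hτ := measurable_apply_entrTime hA
  have h0B : MeasurableSet ((fun ω : ℕ → X => ω 0) ⁻¹' B) := measurable_pi_apply 0 hB
  rw [Measure.map_apply (measurable_pi_apply 0) hB, Measure.map_apply hτ hB, afterEntrance,
    Measure.map_apply (measurable_shift 1) h0B, Measure.map_apply (measurable_shift 1) (hτ hB),
    Measure.restrict_apply (measurable_shift 1 h0B),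
    Measure.restrict_apply (measurable_shift 1 (hτ hB))]
  calc _ = (μ.bind P) (firstEntranceInto A B 0) := by
        congr 1
        ext ω
        simp [firstEntranceInto, EntersAt, shift, and_comm]
    _ = _ := measure_firstEntranceInto_zero_eq_tsum hP hinv hrec hA hB hμB.ne
    _ = _ := (measure_preimage_shift_entrTime_inter hP hinv hrec hA hB).symm

end PathSpace

theorem stmt10_general {X : Type*} [MeasurableSpace X]
    (P : X → Measure (ℕ → X)) (hPmeas : Measurable P)
    (hP0 : ∀ x, (P x).map (fun ω => ω 0) = Measure.dirac x)
    (hPstep : ∀ x, (P x).map (fun ω n => ω (n + 1)) = ((P x).map (fun ω => ω 1)).bind P)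
    (μ : Measure X) [SigmaFinite μ]
    (hinv : Measure.map (fun ω => ω 1) (μ.bind P) = μ)
    (hrecur : ∀ B : Set X, MeasurableSet B → 0 < μ B →
      ((μ.restrict B).bind P) {ω | ∀ n, 1 ≤ n → ω n ∉ B} = 0)
    (A : Set X) (hA : MeasurableSet A)
    (μentr : Measure X)
    (hμentr : μentr = (Measure.map (fun ω => ω 1) ((μ.restrict Aᶜ).bind P)).restrict A) :
    ∀ B : Set X, MeasurableSet B → B ⊆ A →
      μentr B = ∫⁻ x, (P x) {ω | ω (entrTime A ω) ∈ B} ∂μentr := by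
  intro B hB _
  have hP : PathSpace.IsMarkovFamily P := ⟨hPmeas, hP0, hPstep⟩
  have hτ := PathSpace.measurable_apply_entrTime hA
  calc μentr B = (μentr.bind P).map (fun ω => ω 0) B := by
        rw [PathSpace.map_eval_zero_bind hP]
    _ = (μentr.bind P).map (fun ω => ω (entrTime A ω)) B := by
        rw [hμentr, PathSpace.bind_entranceMeasure_eq_afterEntrance hP μ hA,
          PathSpace.map_eval_zero_afterEntrance_eq_map_entrTime hP hinv hrecur hA]
    _ = ∫⁻ x, P x {ω | ω (entrTime A ω) ∈ B} ∂μentr := by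
        rw [Measure.map_apply hτ hB, Measure.bind_apply (hτ hB) hPmeas.aemeasurable]
        rfl

/-- Let `Y` be a Markov chain on a topological space `X` given by its family `P` of path-space
laws, recurrent starting under a σ-finite invariant Borel measure `μ`, and let `A` be Borel
with `P_{μ|_{Aᶜ}}(Y₁ ∈ A) > 0`. Then the measure `μ_A^{entr}(B) = ∫_{Aᶜ} P_x(Y₁ ∈ B) μ(dx)`
(for Borel `B ⊆ A`) is invariant for the entrance chain `Y^{→A}`, obtained by sampling `Y`
at the moments it enters `A` from `Aᶜ`. -/
theorem stmt10 {X : Type*} [TopologicalSpace X] [MeasurableSpace X] [BorelSpace X]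
    (P : X → Measure (ℕ → X)) (hPmeas : Measurable P)
    (hPprob : ∀ x, IsProbabilityMeasure (P x))
    (hP0 : ∀ x, (P x).map (fun ω => ω 0) = Measure.dirac x)
    (hPstep : ∀ x, (P x).map (fun ω n => ω (n + 1)) = ((P x).map (fun ω => ω 1)).bind P)
    (μ : Measure X) [SigmaFinite μ]
    (hinv : Measure.map (fun ω => ω 1) (μ.bind P) = μ)
    (hrecur : ∀ B : Set X, MeasurableSet B → 0 < μ B →
      ((μ.restrict B).bind P) {ω | ∀ n, 1 ≤ n → ω n ∉ B} = 0)
    (A : Set X) (hA : MeasurableSet A)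
    (μentr : Measure X)
    (hμentr : μentr = (Measure.map (fun ω => ω 1) ((μ.restrict Aᶜ).bind P)).restrict A)
    (hpos : 0 < μentr A) :
    ∀ B : Set X, MeasurableSet B → B ⊆ A →
      μentr B = ∫⁻ x, (P x) {ω | ω (entrTime A ω) ∈ B} ∂μentr :=
  stmt10_general P hPmeas hP0 hPstep μ hinv hrecur A hA μentr hμentr
end

section
/- Let Y be a Markov chain on a topological space X, recurrent starting under a σ-finite invariant Borel measure μ, and let A be a Borel set with P_{μ|_{A^c}}(Y_1 ∈ A) > 0. Then the measure μ_{A^c}^{exit}(dx) := P_x(Y_1 ∈ A) μ(dx) on A^c is invariant for the exit Markov chain Y^{A^c→}, obtained by sampling Y at the last position in A^c before each entrance into A. -/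
/-!
Write `λ` for the one-step kernel, `q` for `λ` with the transitions `Aᶜ → A` removed and
`e(dy) = ∫_{Aᶜ} λ(x, dy ∩ A) μ(dx)` for the flow of `μ` into `A`. Invariance of `μ` reads
`μ = μ q + e`, so the potential `G = ∑ₖ e qᵏ` satisfies `G ≤ μ`, and σ-finiteness lets us write
`μ = η + G` with `η q = η`. Then `η λ = η + ẽ`, where `ẽ` is the flow of `η` into `A`; iterating,
the chain started from `ẽ` spends expected time at most `μ V` in `V`, so by Borel–Cantelli it
a.s. visits a set of finite measure only finitely often, which recurrence forbids for paths
starting in it. Hence `ẽ = 0`, so `μexit B = ∫_B λ(·, A) dG = ∑ₖ ∫_B λ(·, A) d(e qᵏ)`, and the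
`k`-th term is the `μ|_{Aᶜ}`-mass of the paths that enter `A` at time `1` and next enter `A` at
time `k + 2`, from a point of `B`. Recurrence also makes the paths that never re-enter `A`
negligible.
-/

open MeasureTheory Set
open scoped ENNReal

/-- First entrance time at time ≥ 2 of a path `ω` into `A` from `Aᶜ`
(`0` if no such entrance occurs). This is the next entrance time after time `1`. -/
noncomputable def entrTime2 {X : Type*} (A : Set X) (ω : ℕ → X) : ℕ :=
  sInf {k | 2 ≤ k ∧ ω (k - 1) ∉ A ∧ ω k ∈ A}

open Filter ProbabilityTheory

lemma Nat.exists_last_of_eventually_not {p : ℕ → Prop} (hp : ∃ m, p m)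
    (hev : ∀ᶠ n in atTop, ¬ p n) :
    ∃ m, p m ∧ ∀ n > m, ¬ p n := by
  classical
  have hex : ∃ M, ∀ n ≥ M, ¬ p n := eventually_atTop.1 hev
  obtain ⟨m, hm⟩ := hp
  have hpos : Nat.find hex ≠ 0 := fun h0 => Nat.find_spec hex m (h0 ▸ Nat.zero_le m) hm
  refine ⟨Nat.find hex - 1, ?_, fun n hn => Nat.find_spec hex n (by omega)⟩
  by_contra hlast
  refine Nat.find_min hex (show Nat.find hex - 1 < Nat.find hex by omega) fun n hn => ?_
  rcases (show n = Nat.find hex - 1 ∨ Nat.find hex ≤ n by omega) with rfl | hn'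
  · exact hlast
  · exact Nat.find_spec hex n hn'

namespace MeasureTheory.Measure

variable {α : Type*} [MeasurableSpace α] {μ ν : Measure α}

lemma exists_add_eq_of_le [SigmaFinite μ] (h : ν ≤ μ) : ∃ η, η + ν = μ := by
  set D := disjointed (spanningSets μ)
  have hD : ∀ n, μ (D n) < ∞ := fun n =>
    (measure_mono (disjointed_subset _ n)).trans_lt (measure_spanningSets_lt_top μ n)
  have hle : ∀ n, ν.restrict (D n) ≤ μ.restrict (D n) := fun n => restrict_mono le_rfl h
  have hfin : ∀ n, IsFiniteMeasure (ν.restrict (D n)) := fun n =>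
    ⟨by simpa using (h (D n)).trans_lt (hD n)⟩
  refine ⟨sum fun n => μ.restrict (D n) - ν.restrict (D n), ?_⟩
  calc (sum fun n => μ.restrict (D n) - ν.restrict (D n)) + ν
      = sum fun n => μ.restrict (D n) - ν.restrict (D n) + ν.restrict (D n) := by
        rw [← sum_add_sum, sum_restrict_disjointed_spanningSets]
    _ = μ := by
        simp_rw [sub_add_cancel_of_le (hle _)]
        exact sum_restrict_disjointed_spanningSets μ μ

lemma eq_of_add_eq_add_of_le [SigmaFinite μ] {η₁ η₂ γ : Measure α} (hγ : γ ≤ μ)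
    (h : η₁ + γ = η₂ + γ) : η₁ = η₂ := by
  refine ext_of_iUnion_eq_univ (iUnion_spanningSets μ) fun n => ?_
  have : IsFiniteMeasure (γ.restrict (spanningSets μ n)) :=
    ⟨by simpa using (hγ _).trans_lt (measure_spanningSets_lt_top μ n)⟩
  have h' := congrArg (fun m => m.restrict (spanningSets μ n) - γ.restrict (spanningSets μ n)) h
  simpa only [restrict_add, Measure.add_sub_cancel] using h'

lemma bind_mono_left {β : Type*} [MeasurableSpace β] {f : α → Measure β} (hf : Measurable f)
    (h : μ ≤ ν) : μ.bind f ≤ ν.bind f :=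
  le_iff.2 fun s hs => by
    simpa only [bind_apply hs hf.aemeasurable] using lintegral_mono' h le_rfl

lemma add_bind {β : Type*} [MeasurableSpace β] {f : α → Measure β} (hf : Measurable f) :
    (μ + ν).bind f = μ.bind f + ν.bind f := by
  ext s hs
  simp only [add_apply, bind_apply hs hf.aemeasurable, lintegral_add_measure]

lemma ae_apply_eq_zero_of_bind_apply_eq_zero {β : Type*} [MeasurableSpace β] {f : α → Measure β}
    (hf : AEMeasurable f μ) {s : Set β} (hs : μ.bind f s = 0) : ∀ᵐ x ∂μ, f x s = 0 :=
  (ae_ae_of_ae_bind hf (measure_eq_zero_iff_ae_notMem.1 hs)).mono fun _ hx =>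
    measure_eq_zero_iff_ae_notMem.2 hx

lemma apply_iterate_preimage_eq_add_sum {f : α → α}
    (hf : Measurable f) {Q Q' : Measure α} (h : Q.map f = Q + Q') (k : ℕ) {E : Set α}
    (hE : MeasurableSet E) :
    Q (f^[k] ⁻¹' E) = Q E + ∑ j ∈ Finset.range k, Q' (f^[j] ⁻¹' E) := by
  induction k generalizing E with
  | zero => simp
  | succ k ih =>
    rw [Function.iterate_succ, preimage_comp, ← map_apply hf (hf.iterate k hE), h,
      add_apply, ih hE, Finset.sum_range_succ, add_assoc]

lemma comp_finset_sum {β ι : Type*} [MeasurableSpace β] {κ : Kernel α β} (s : Finset ι)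
    (m : ι → Measure α) : κ ∘ₘ (∑ i ∈ s, m i) = ∑ i ∈ s, κ ∘ₘ m i := by
  classical
  induction s using Finset.induction_on with
  | empty => simp
  | insert i s hi ih => rw [Finset.sum_insert hi, Finset.sum_insert hi, comp_add, ih]

end MeasureTheory.Measure

namespace ProbabilityTheory.Kernel

variable {X : Type*} [MeasurableSpace X] (κ : Kernel X X) {A : Set X} (hA : MeasurableSet A)
  {μ : Measure X}

lemma pow_zero_comp (m : Measure X) : (κ ^ 0 : Kernel X X) ∘ₘ m = m :=
  Measure.id_comp

lemma pow_succ_comp (m : Measure X) (k : ℕ) :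
    (κ ^ (k + 1) : Kernel X X) ∘ₘ m = κ ∘ₘ ((κ ^ k : Kernel X X) ∘ₘ m) := by
  rw [pow_succ', Measure.comp_assoc]
  rfl

lemma pow_succ_comp' (m : Measure X) (k : ℕ) :
    (κ ^ (k + 1) : Kernel X X) ∘ₘ m = (κ ^ k : Kernel X X) ∘ₘ (κ ∘ₘ m) := by
  rw [pow_succ, Measure.comp_assoc]
  rfl

open scoped Classical in
noncomputable def killed : Kernel X X := piecewise hA κ (κ.restrict hA.compl)

noncomputable def entranceFlow (m : Measure X) : Measure X := κ.restrict hA ∘ₘ m.restrict Aᶜ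

noncomputable def entrancePotential (m : Measure X) : Measure X :=
  Measure.sum fun k => (κ.killed hA ^ k : Kernel X X) ∘ₘ κ.entranceFlow hA m

lemma comp_eq_killed_comp_add_entranceFlow (m : Measure X) :
    κ ∘ₘ m = κ.killed hA ∘ₘ m + κ.entranceFlow hA m := by
  ext V hV
  rw [Measure.add_apply, entranceFlow, Measure.bind_apply hV κ.aemeasurable,
    Measure.bind_apply hV (κ.killed hA).aemeasurable,
    Measure.bind_apply hV (κ.restrict _).aemeasurable, ← lintegral_indicator hA.compl,
    ← lintegral_add_left ((κ.killed hA).measurable_coe hV)]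
  refine lintegral_congr fun x => ?_
  by_cases hx : x ∈ A
  · simp [killed, piecewise_apply, hx]
  · simp only [killed, piecewise_apply, hx, if_false, indicator_of_mem (mem_compl hx),
      restrict_apply' _ _ _ hV, ← sdiff_eq]
    rw [add_comm, measure_inter_add_sdiff _ hA]

lemma entranceFlow_apply_univ (m : Measure X) :
    κ.entranceFlow hA m univ = ∫⁻ x in Aᶜ, κ x A ∂m := by
  simp [entranceFlow, Measure.bind_apply MeasurableSet.univ (Kernel.aemeasurable _),
    Kernel.restrict_apply]

variable {κ} in
lemma entrancePotential_le (hμ : κ ∘ₘ μ = μ) : κ.entrancePotential hA μ ≤ μ := by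
  set G : ℕ → Measure X := fun N =>
    ∑ k ∈ Finset.range N, (κ.killed hA ^ k : Kernel X X) ∘ₘ κ.entranceFlow hA μ
  have hpartial : ∀ N, G N ≤ μ := by
    intro N
    induction N with
    | zero => exact Measure.zero_le μ
    | succ N ih =>
      calc G (N + 1) = κ.killed hA ∘ₘ G N + κ.entranceFlow hA μ := by
            simp only [G, Finset.sum_range_succ', Measure.comp_finset_sum, pow_succ_comp,
              pow_zero_comp]
        _ ≤ κ.killed hA ∘ₘ μ + κ.entranceFlow hA μ := by
            gcongr
            exact Measure.bind_mono_left (κ.killed hA).measurable ih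
        _ = μ := by rw [← comp_eq_killed_comp_add_entranceFlow, hμ]
  refine Measure.le_iff.2 fun V hV => ?_
  rw [entrancePotential, Measure.sum_apply _ hV]
  refine ENNReal.tsum_le_of_sum_range_le fun N => ?_
  simpa only [G, Measure.finsetSum_apply] using hpartial N V

lemma killed_comp_entrancePotential_add_entranceFlow (m : Measure X) :
    κ.killed hA ∘ₘ κ.entrancePotential hA m + κ.entranceFlow hA m = κ.entrancePotential hA m := by
  rw [entrancePotential, Measure.bind_sum _ _ (κ.killed hA).aemeasurable]
  ext V hV
  simp only [Measure.add_apply, Measure.sum_apply _ hV, ← pow_succ_comp]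
  conv_rhs => rw [tsum_eq_zero_add' ENNReal.summable, pow_zero_comp, add_comm]

variable {κ} in
lemma exists_add_entrancePotential_eq [SigmaFinite μ] (hμ : κ ∘ₘ μ = μ) :
    ∃ η, η + κ.entrancePotential hA μ = μ ∧ κ.killed hA ∘ₘ η = η := by
  obtain ⟨η, hη⟩ := Measure.exists_add_eq_of_le (entrancePotential_le hA hμ)
  refine ⟨η, hη, Measure.eq_of_add_eq_add_of_le (entrancePotential_le hA hμ) ?_⟩
  calc κ.killed hA ∘ₘ η + κ.entrancePotential hA μ
      = κ.killed hA ∘ₘ (η + κ.entrancePotential hA μ) + κ.entranceFlow hA μ := by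
        rw [Measure.comp_add, add_assoc, killed_comp_entrancePotential_add_entranceFlow]
    _ = η + κ.entrancePotential hA μ := by
        rw [hη, ← comp_eq_killed_comp_add_entranceFlow, hμ]

end ProbabilityTheory.Kernel

namespace MarkovChain

variable {X : Type*}

def shift (ω : ℕ → X) : ℕ → X := fun n => ω (n + 1)

lemma shift_iterate_apply (k : ℕ) (ω : ℕ → X) (n : ℕ) : shift^[k] ω n = ω (n + k) := by
  induction k generalizing ω with
  | zero => rfl
  | succ k ih => exact ih (shift ω)

lemma preimage_shift_iterate_eval_zero (j : ℕ) (V : Set X) :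
    shift^[j] ⁻¹' ((fun ω => ω 0) ⁻¹' V) = (fun ω => ω j) ⁻¹' V := by
  ext ω
  simp [shift_iterate_apply]

def hasLastVisit (V : Set X) : Set (ℕ → X) := {ω | ∃ m, ω m ∈ V ∧ ∀ n > m, ω n ∉ V}

def noEntranceBefore (A : Set X) (N : ℕ) : Set (ℕ → X) :=
  {ω | ∀ j < N, ¬(ω j ∉ A ∧ ω (j + 1) ∈ A)}

def exitsAt (A B : Set X) (N : ℕ) : Set (ℕ → X) := {ω | ω N ∈ B ∧ ω (N + 1) ∈ A}

lemma noEntranceBefore_succ (A : Set X) (N : ℕ) :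
    noEntranceBefore A (N + 1) = {ω | ¬(ω 0 ∉ A ∧ ω 1 ∈ A)} ∩ shift ⁻¹' noEntranceBefore A N := by
  ext ω
  exact Nat.forall_lt_succ_left

def nextExitAt (A B : Set X) (k : ℕ) : Set (ℕ → X) :=
  (fun ω => ω 1) ⁻¹' A ∩ shift ⁻¹' (noEntranceBefore A k ∩ exitsAt A B k)

section EntranceTime

variable {A B : Set X} {ω : ℕ → X}

lemma entrTime2_eq_zero_or_exists (A : Set X) (ω : ℕ → X) :
    entrTime2 A ω = 0 ∨ ∃ k, entrTime2 A ω = k + 2 := by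
  rcases eq_empty_or_nonempty {k | 2 ≤ k ∧ ω (k - 1) ∉ A ∧ ω k ∈ A} with h | h
  · left
    rw [entrTime2, h, Nat.sInf_empty]
  · right
    have := (Nat.sInf_mem h).1
    exact ⟨entrTime2 A ω - 2, by unfold entrTime2; omega⟩

lemma not_entrance_of_entrTime2_eq_zero (h : entrTime2 A ω = 0) (n : ℕ) (hn : 1 ≤ n) :
    ¬(ω n ∉ A ∧ ω (n + 1) ∈ A) := by
  rcases Nat.sInf_eq_zero.1 h with h0 | hempty
  · exact absurd h0.1 (by omega)
  · intro hent
    have hmem : n + 1 ∈ {k | 2 ≤ k ∧ ω (k - 1) ∉ A ∧ ω k ∈ A} := ⟨by omega, by simpa using hent⟩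
    rw [hempty] at hmem
    exact hmem

lemma entrTime2_eq_add_two_iff (k : ℕ) :
    entrTime2 A ω = k + 2 ↔ shift ω ∈ noEntranceBefore A k ∧ ω (k + 1) ∉ A ∧ ω (k + 2) ∈ A := by
  set S := {k | 2 ≤ k ∧ ω (k - 1) ∉ A ∧ ω k ∈ A}
  have hmem : k + 2 ∈ S ↔ ω (k + 1) ∉ A ∧ ω (k + 2) ∈ A := by simp [S]
  constructor
  · intro h
    have hS : S.Nonempty := Set.nonempty_iff_ne_empty.2 fun hS => by
      simp [entrTime2, S, hS] at h
    refine ⟨fun j hj hent => ?_, hmem.1 (h ▸ Nat.sInf_mem hS)⟩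
    have : entrTime2 A ω ≤ j + 2 := Nat.sInf_le ⟨by omega, hent⟩
    omega
  · rintro ⟨hno, hent⟩
    refine IsLeast.csInf_eq ⟨hmem.2 hent, fun j ⟨hj2, hj⟩ => ?_⟩
    by_contra hlt
    obtain ⟨i, rfl⟩ : ∃ i, j = i + 2 := ⟨j - 2, by omega⟩
    exact hno i (by omega) hj

lemma mem_hasLastVisit_of_entrTime2_eq_zero (hBA : B ⊆ Aᶜ) (h0 : ω 0 ∈ B) (h1 : ω 1 ∈ A)
    (hT : entrTime2 A ω = 0) : ω ∈ hasLastVisit A ∪ hasLastVisit B := by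
  by_cases hleave : ∃ j ≥ 1, ω j ∉ A
  · obtain ⟨j, hj1, hj⟩ := hleave
    have hout : ∀ n ≥ j, ω n ∉ A := fun n hn => by
      induction n, hn using Nat.le_induction with
      | base => exact hj
      | succ n hn ih => exact fun hA => not_entrance_of_entrTime2_eq_zero hT n (by omega) ⟨ih, hA⟩
    exact Or.inl (Nat.exists_last_of_eventually_not ⟨1, h1⟩ (eventually_atTop.2 ⟨j, hout⟩))
  · simp only [not_exists, not_and, not_not] at hleave
    exact Or.inr ⟨0, h0, fun n hn hnB => hBA hnB (hleave n hn)⟩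

lemma setOf_entrTime2_eq_add_two (hBA : B ⊆ Aᶜ) (k : ℕ) :
    {ω | ω 1 ∈ A ∧ entrTime2 A ω = k + 2 ∧ ω (k + 1) ∈ B} = nextExitAt A B k := by
  ext ω
  constructor
  · rintro ⟨h1, hT, hB⟩
    obtain ⟨hno, -, hA⟩ := (entrTime2_eq_add_two_iff k).1 hT
    exact ⟨h1, hno, hB, hA⟩
  · rintro ⟨h1, hno, hB, hA⟩
    exact ⟨h1, (entrTime2_eq_add_two_iff k).2 ⟨hno, hBA hB, hA⟩, hB⟩

end EntranceTime

variable [MeasurableSpace X]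

lemma measurable_shift : Measurable (shift (X := X)) :=
  measurable_pi_lambda _ fun n => measurable_pi_apply (n + 1)

lemma measurableSet_noEntranceBefore_inter_exitsAt {A B : Set X} (hA : MeasurableSet A)
    (hB : MeasurableSet B) (k : ℕ) : MeasurableSet (noEntranceBefore A k ∩ exitsAt A B k) := by
  simp only [noEntranceBefore, exitsAt]
  measurability

lemma measurableSet_nextExitAt {A B : Set X} (hA : MeasurableSet A) (hB : MeasurableSet B)
    (k : ℕ) : MeasurableSet (nextExitAt A B k) :=
  (measurable_pi_apply 1 hA).inter
    (measurable_shift (measurableSet_noEntranceBefore_inter_exitsAt hA hB k))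

lemma measure_eval_zero_preimage_eq_zero {Q : Measure (ℕ → X)} {V : Set X}
    (hlast : Q (hasLastVisit V) = 0)
    (hvisits : ∑' j, Q ((fun ω => ω j) ⁻¹' V) ≠ ∞) :
    Q ((fun ω => ω 0) ⁻¹' V) = 0 := by
  refine measure_mono_null (fun ω hω => ?_)
    (measure_union_null (measure_limsup_atTop_eq_zero hvisits) hlast)
  by_contra hω'
  simp only [mem_union, mem_limsup_iff_frequently_mem, not_or, not_frequently] at hω'
  exact hω'.2 (Nat.exists_last_of_eventually_not ⟨0, hω⟩ hω'.1)

lemma measure_exit_eq_tsum {A B : Set X} (hA : MeasurableSet A) (hB : MeasurableSet B)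
    (hBA : B ⊆ Aᶜ) {Q : Measure (ℕ → X)} (hQ : Q (hasLastVisit A ∪ hasLastVisit B) = 0) :
    Q {ω | ω 1 ∈ A ∧ ω (entrTime2 A ω - 1) ∈ B} = ∑' k, Q (nextExitAt A B k) := by
  set F : ℕ → Set (ℕ → X) := fun k => {ω | ω 1 ∈ A ∧ entrTime2 A ω = k + 2 ∧ ω (k + 1) ∈ B}
  have hF : ∀ k, MeasurableSet (F k) := fun k => by
    simpa only [F, setOf_entrTime2_eq_add_two hBA] using measurableSet_nextExitAt hA hB k
  have hdisj : Pairwise (Function.onFun Disjoint F) := fun i j hij =>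
    Set.disjoint_left.2 fun ω hi hj => hij (by have := hi.2.1.symm.trans hj.2.1; omega)
  simp_rw [← setOf_entrTime2_eq_add_two hBA]
  have hsub : {ω | ω 1 ∈ A ∧ ω (entrTime2 A ω - 1) ∈ B}
      ⊆ (⋃ k, F k) ∪ (hasLastVisit A ∪ hasLastVisit B) := fun ω ⟨h1, hB⟩ => by
    rcases entrTime2_eq_zero_or_exists A ω with hT | ⟨k, hT⟩
    -- `entrTime2 A ω = 0` encodes "no entrance after time 1", so `ω (entrTime2 A ω - 1) = ω 0`
    · exact Or.inr (mem_hasLastVisit_of_entrTime2_eq_zero hBA (by simpa [hT] using hB) h1 hT)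
    · exact Or.inl (mem_iUnion.2 ⟨k, h1, hT, by simpa [hT] using hB⟩)
  have hsup : (⋃ k, F k) ⊆ {ω | ω 1 ∈ A ∧ ω (entrTime2 A ω - 1) ∈ B} := fun ω hω => by
    obtain ⟨k, h1, hT, hB⟩ := mem_iUnion.1 hω
    exact ⟨h1, by simpa [hT] using hB⟩
  rw [← measure_iUnion hdisj hF]
  refine le_antisymm ((measure_mono hsub).trans ?_) (measure_mono hsup)
  exact (measure_union_le _ _).trans (by simp [hQ])

def IsRecurrent (P : X → Measure (ℕ → X)) (μ : Measure X) : Prop :=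
  ∀ B : Set X, MeasurableSet B → 0 < μ B →
    ((μ.restrict B).bind P) {ω | ∀ n, 1 ≤ n → ω n ∉ B} = 0

structure IsMarkovFamily (P : X → Measure (ℕ → X)) : Prop where
  measurable : Measurable P
  map_eval_zero : ∀ x, (P x).map (fun ω => ω 0) = Measure.dirac x
  map_shift : ∀ x, (P x).map shift = ((P x).map (fun ω => ω 1)).bind P

namespace IsMarkovFamily

variable {P : X → Measure (ℕ → X)} (hP : IsMarkovFamily P)
include hP

noncomputable def step : Kernel X X where
  toFun x := (P x).map (fun ω : ℕ → X => ω 1)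
  measurable' := (Measure.measurable_map _ (measurable_pi_apply 1)).comp hP.measurable

lemma step_apply_apply (x : X) {W : Set X} (hW : MeasurableSet W) :
    hP.step x W = P x ((fun ω => ω 1) ⁻¹' W) :=
  Measure.map_apply (measurable_pi_apply 1) hW

lemma measure_eval_zero_preimage (x : X) {W : Set X} (hW : MeasurableSet W) :
    P x ((fun ω => ω 0) ⁻¹' W) = W.indicator 1 x := by
  rw [← Measure.map_apply (measurable_pi_apply 0) hW, hP.map_eval_zero, Measure.dirac_apply' _ hW]

lemma measure_eval_zero_preimage_inter (x : X) {W : Set X} (hW : MeasurableSet W)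
    (E : Set (ℕ → X)) :
    P x ((fun ω => ω 0) ⁻¹' W ∩ E) = W.indicator (fun y => P y E) x := by
  by_cases hx : x ∈ W
  · rw [indicator_of_mem hx, inter_comm, measure_inter_conull]
    rw [← preimage_compl, hP.measure_eval_zero_preimage x hW.compl,
      indicator_of_notMem (notMem_compl_iff.2 hx)]
  · rw [indicator_of_notMem hx]
    refine measure_mono_null inter_subset_left ?_
    rw [hP.measure_eval_zero_preimage x hW, indicator_of_notMem hx]

lemma measure_shift_preimage (x : X) {S : Set (ℕ → X)} (hS : MeasurableSet S) :
    P x (shift ⁻¹' S) = ∫⁻ y, P y S ∂hP.step x := by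
  rw [← Measure.map_apply measurable_shift hS, hP.map_shift,
    Measure.bind_apply hS hP.measurable.aemeasurable]
  rfl

lemma measure_shift_preimage_eval_zero_inter (x : X) {W : Set X} (hW : MeasurableSet W)
    {R : Set (ℕ → X)} (hR : MeasurableSet R) :
    P x (shift ⁻¹' ((fun ω => ω 0) ⁻¹' W ∩ R)) = ∫⁻ y in W, P y R ∂hP.step x := by
  rw [hP.measure_shift_preimage x (measurable_pi_apply 0 hW |>.inter hR), ← lintegral_indicator hW]
  simp_rw [hP.measure_eval_zero_preimage_inter _ hW]

lemma bind_map_eval_zero (m : Measure X) : (m.bind P).map (fun ω => ω 0) = m := by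
  ext V hV
  rw [Measure.map_apply (measurable_pi_apply 0) hV, Measure.bind_apply (measurable_pi_apply 0 hV)
    hP.measurable.aemeasurable]
  simp_rw [hP.measure_eval_zero_preimage _ hV]
  exact lintegral_indicator_one hV

lemma bind_map_shift (m : Measure X) : (m.bind P).map shift = (hP.step ∘ₘ m).bind P := by
  ext S hS
  have hPS : Measurable fun y => P y S := (Measure.measurable_coe hS).comp hP.measurable
  rw [Measure.map_apply measurable_shift hS, Measure.bind_apply (measurable_shift hS)
    hP.measurable.aemeasurable, Measure.bind_apply hS hP.measurable.aemeasurable,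
    Measure.lintegral_bind hP.step.aemeasurable hPS.aemeasurable]
  simp_rw [hP.measure_shift_preimage _ hS]

section Invariant

variable {μ : Measure X} (hinv : Measure.map (fun ω => ω 1) (μ.bind P) = μ)
include hinv

lemma step_comp_eq_of_map : hP.step ∘ₘ μ = μ := by
  ext V hV
  conv_rhs => rw [← hinv]
  rw [Measure.bind_apply hV hP.step.aemeasurable, Measure.map_apply (measurable_pi_apply 1) hV,
    Measure.bind_apply (measurable_pi_apply 1 hV) hP.measurable.aemeasurable]
  simp_rw [hP.step_apply_apply _ hV]

lemma bind_map_shift_iterate (k : ℕ) : (μ.bind P).map shift^[k] = μ.bind P := by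
  induction k with
  | zero => exact Measure.map_id
  | succ k ih =>
    rw [Function.iterate_succ', ← Measure.map_map measurable_shift (measurable_shift.iterate k), ih,
      hP.bind_map_shift, hP.step_comp_eq_of_map hinv]

lemma bind_hasLastVisit_eq_zero
    (hrecur : IsRecurrent P μ) {V : Set X} (hV : MeasurableSet V) :
    (μ.bind P) (hasLastVisit V) = 0 := by
  set R : Set (ℕ → X) := {ω | ∀ n, 1 ≤ n → ω n ∉ V}
  have hR : MeasurableSet R := by measurability
  have hbase : (μ.bind P) ((fun ω => ω 0) ⁻¹' V ∩ R) = 0 := by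
    rw [Measure.bind_apply (measurable_pi_apply 0 hV |>.inter hR) hP.measurable.aemeasurable]
    simp_rw [hP.measure_eval_zero_preimage_inter _ hV]
    rw [lintegral_indicator hV, ← Measure.bind_apply hR hP.measurable.aemeasurable]
    rcases eq_zero_or_pos (μ V) with hμV | hμV
    · simp [Measure.restrict_eq_zero.2 hμV]
    · exact hrecur V hV hμV
  have hcover : hasLastVisit V ⊆ ⋃ m, shift^[m] ⁻¹' ((fun ω => ω 0) ⁻¹' V ∩ R) := by
    rintro ω ⟨m, hm, hlast⟩
    refine mem_iUnion.2 ⟨m, ?_, fun n hn => ?_⟩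
    · simpa [shift_iterate_apply] using hm
    · simpa [shift_iterate_apply] using hlast (n + m) (by omega)
  refine measure_mono_null hcover (measure_iUnion_null fun m => ?_)
  rw [← Measure.map_apply (measurable_shift.iterate m) (measurable_pi_apply 0 hV |>.inter hR),
    hP.bind_map_shift_iterate hinv, hbase]

end Invariant

section Killed

variable {A : Set X} (hA : MeasurableSet A)

lemma measure_not_entrance_inter_shift (x : X) {R : Set (ℕ → X)} (hR : MeasurableSet R) :
    P x ({ω | ¬(ω 0 ∉ A ∧ ω 1 ∈ A)} ∩ shift ⁻¹' R) = ∫⁻ y, P y R ∂hP.step.killed hA x := by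
  set S := {ω : ℕ → X | ¬(ω 0 ∉ A ∧ ω 1 ∈ A)} ∩ shift ⁻¹' R
  by_cases hx : x ∈ A
  · have hS : (fun ω => ω 0) ⁻¹' A ∩ S = (fun ω => ω 0) ⁻¹' A ∩ shift ⁻¹' R := by
      ext ω
      simp +contextual [S]
    have h := hP.measure_eval_zero_preimage_inter x hA S
    rw [hS, hP.measure_eval_zero_preimage_inter x hA, indicator_of_mem hx,
      indicator_of_mem hx] at h
    rw [← h, hP.measure_shift_preimage x hR]
    simp [Kernel.killed, Kernel.piecewise_apply, hx]
  · have hS : (fun ω => ω 0) ⁻¹' Aᶜ ∩ S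
        = (fun ω => ω 0) ⁻¹' Aᶜ ∩ shift ⁻¹' ((fun ω => ω 0) ⁻¹' Aᶜ ∩ R) := by
      ext ω
      simp +contextual [S, shift]
    have h := hP.measure_eval_zero_preimage_inter x hA.compl S
    rw [hS, hP.measure_eval_zero_preimage_inter x hA.compl, indicator_of_mem (mem_compl hx),
      indicator_of_mem (mem_compl hx)] at h
    rw [← h, hP.measure_shift_preimage_eval_zero_inter x hA.compl hR]
    simp [Kernel.killed, Kernel.piecewise_apply, hx, Kernel.restrict_apply]

lemma bind_noEntranceBefore_inter_exitsAt {B : Set X} (hB : MeasurableSet B) (N : ℕ)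
    (m : Measure X) :
    (m.bind P) (noEntranceBefore A N ∩ exitsAt A B N)
      = ∫⁻ x in B, hP.step x A ∂((hP.step.killed hA ^ N : Kernel X X) ∘ₘ m) := by
  induction N generalizing m with
  | zero =>
    have hE : noEntranceBefore A 0 ∩ exitsAt A B 0
        = (fun ω => ω 0) ⁻¹' B ∩ (fun ω => ω 1) ⁻¹' A := by
      ext ω
      simp [noEntranceBefore, exitsAt]
    rw [hE, Measure.bind_apply (by measurability) hP.measurable.aemeasurable, Kernel.pow_zero_comp,
      ← lintegral_indicator hB]
    simp_rw [hP.measure_eval_zero_preimage_inter _ hB, hP.step_apply_apply _ hA]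
  | succ N ih =>
    have hR := measurableSet_noEntranceBefore_inter_exitsAt hA hB N
    have hE : noEntranceBefore A (N + 1) ∩ exitsAt A B (N + 1)
        = {ω | ¬(ω 0 ∉ A ∧ ω 1 ∈ A)} ∩ shift ⁻¹' (noEntranceBefore A N ∩ exitsAt A B N) := by
      rw [noEntranceBefore_succ, preimage_inter, inter_assoc]
      rfl
    have hPR : Measurable fun y => P y (noEntranceBefore A N ∩ exitsAt A B N) :=
      (Measure.measurable_coe hR).comp hP.measurable
    rw [Kernel.pow_succ_comp', ← ih, hE, Measure.bind_apply ((by measurability :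
      MeasurableSet {ω : ℕ → X | ¬(ω 0 ∉ A ∧ ω 1 ∈ A)}).inter (measurable_shift hR))
      hP.measurable.aemeasurable, Measure.bind_apply hR hP.measurable.aemeasurable,
      Measure.lintegral_bind (Kernel.aemeasurable _) hPR.aemeasurable]
    simp_rw [hP.measure_not_entrance_inter_shift hA _ hR]

lemma setLIntegral_compl_eval_one_inter_shift (μ : Measure X) {R : Set (ℕ → X)}
    (hR : MeasurableSet R) :
    ∫⁻ x in Aᶜ, P x ((fun ω => ω 1) ⁻¹' A ∩ shift ⁻¹' R) ∂μ
      = ((hP.step.entranceFlow hA μ).bind P) R := by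
  have hPR : Measurable fun y => P y R := (Measure.measurable_coe hR).comp hP.measurable
  rw [Kernel.entranceFlow, Measure.bind_apply hR hP.measurable.aemeasurable,
    Measure.lintegral_bind (Kernel.aemeasurable _) hPR.aemeasurable]
  exact lintegral_congr fun x => hP.measure_shift_preimage_eval_zero_inter x hA hR

lemma entranceFlow_eq_zero {μ : Measure X} [SigmaFinite μ]
    (hinv : Measure.map (fun ω => ω 1) (μ.bind P) = μ)
    (hrecur : IsRecurrent P μ)
    {η : Measure X} (hη : η ≤ μ) (hηq : hP.step.killed hA ∘ₘ η = η) :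
    hP.step.entranceFlow hA η = 0 := by
  set e := hP.step.entranceFlow hA η
  have hshift : (η.bind P).map shift = η.bind P + e.bind P := by
    rw [hP.bind_map_shift, Kernel.comp_eq_killed_comp_add_entranceFlow _ hA, hηq,
      Measure.add_bind hP.measurable]
  have hsum : ∀ k {E}, MeasurableSet E →
      ∑ j ∈ Finset.range k, (e.bind P) (shift^[j] ⁻¹' E) ≤ (μ.bind P) E := fun k E hE =>
    calc ∑ j ∈ Finset.range k, (e.bind P) (shift^[j] ⁻¹' E)
        ≤ (η.bind P) E + ∑ j ∈ Finset.range k, (e.bind P) (shift^[j] ⁻¹' E) := le_add_self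
      _ = (η.bind P) (shift^[k] ⁻¹' E) :=
        (Measure.apply_iterate_preimage_eq_add_sum measurable_shift hshift k hE).symm
      _ ≤ (μ.bind P) (shift^[k] ⁻¹' E) := Measure.bind_mono_left hP.measurable hη _
      _ = (μ.bind P) E := by
        rw [← Measure.map_apply (measurable_shift.iterate k) hE, hP.bind_map_shift_iterate hinv]
  have hle : e.bind P ≤ μ.bind P := Measure.le_iff.2 fun E hE => by simpa using hsum 1 hE
  have hspan : ∀ n, e (spanningSets μ n) = 0 := by
    intro n
    have hV := measurableSet_spanningSets μ n
    rw [← hP.bind_map_eval_zero e, Measure.map_apply (measurable_pi_apply 0) hV]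
    refine measure_eval_zero_preimage_eq_zero (Measure.absolutelyContinuous_of_le hle
      (hP.bind_hasLastVisit_eq_zero hinv hrecur hV)) (ne_top_of_le_ne_top
      (measure_spanningSets_lt_top μ n).ne (ENNReal.tsum_le_of_sum_range_le fun k => ?_))
    have := hsum k (measurable_pi_apply 0 hV)
    rw [← Measure.map_apply (measurable_pi_apply 0) hV, hP.bind_map_eval_zero] at this
    simpa only [preimage_shift_iterate_eval_zero] using this
  rw [← Measure.measure_univ_eq_zero, ← iUnion_spanningSets μ]
  exact measure_iUnion_null hspan

lemma setLIntegral_step_eq_entrancePotential {μ : Measure X} [SigmaFinite μ]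
    (hinv : Measure.map (fun ω => ω 1) (μ.bind P) = μ)
    (hrecur : IsRecurrent P μ)
    {B : Set X} (hBA : B ⊆ Aᶜ) :
    ∫⁻ x in B, hP.step x A ∂μ = ∫⁻ x in B, hP.step x A ∂hP.step.entrancePotential hA μ := by
  obtain ⟨η, hηG, hηq⟩ := hP.step.exists_add_entrancePotential_eq hA (hP.step_comp_eq_of_map hinv)
  have he := hP.entranceFlow_eq_zero hA hinv hrecur (hηG ▸ Measure.le_add_right le_rfl) hηq
  have hη : ∫⁻ x in B, hP.step x A ∂η = 0 := by
    refine nonpos_iff_eq_zero.1 ((lintegral_mono_set hBA).trans ?_)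
    rw [← Kernel.entranceFlow_apply_univ _ hA, he, Measure.coe_zero, Pi.zero_apply]
  conv_lhs => rw [← hηG]
  rw [Measure.restrict_add, lintegral_add_measure, hη, zero_add]

lemma setLIntegral_step_killed_pow_comp_entranceFlow {B : Set X} (hB : MeasurableSet B) (k : ℕ)
    (μ : Measure X) :
    ∫⁻ x in B, hP.step x A ∂((hP.step.killed hA ^ k : Kernel X X) ∘ₘ hP.step.entranceFlow hA μ)
      = ∫⁻ x in Aᶜ, P x (nextExitAt A B k) ∂μ := by
  rw [← hP.bind_noEntranceBefore_inter_exitsAt hA hB]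
  exact (hP.setLIntegral_compl_eval_one_inter_shift hA μ
    (measurableSet_noEntranceBefore_inter_exitsAt hA hB k)).symm

include hA in
lemma setLIntegral_compl_exit_eq_tsum {μ : Measure X}
    (hinv : Measure.map (fun ω => ω 1) (μ.bind P) = μ)
    (hrecur : IsRecurrent P μ)
    {B : Set X} (hB : MeasurableSet B) (hBA : B ⊆ Aᶜ) :
    ∫⁻ x in Aᶜ, P x {ω | ω 1 ∈ A ∧ ω (entrTime2 A ω - 1) ∈ B} ∂μ
      = ∑' k, ∫⁻ x in Aᶜ, P x (nextExitAt A B k) ∂μ := by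
  have hnull := measure_union_null (hP.bind_hasLastVisit_eq_zero hinv hrecur hA)
    (hP.bind_hasLastVisit_eq_zero hinv hrecur hB)
  have hmeas : ∀ k, Measurable fun x => P x (nextExitAt A B k) := fun k =>
    (Measure.measurable_coe (measurableSet_nextExitAt hA hB k)).comp hP.measurable
  rw [← lintegral_tsum fun k => (hmeas k).aemeasurable]
  refine lintegral_congr_ae (ae_restrict_of_ae ?_)
  exact (Measure.ae_apply_eq_zero_of_bind_apply_eq_zero hP.measurable.aemeasurable hnull).mono
    fun x hx => measure_exit_eq_tsum hA hB hBA hx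

end Killed

end IsMarkovFamily

end MarkovChain

open MarkovChain

theorem stmt11_general {X : Type*} [MeasurableSpace X]
    (P : X → Measure (ℕ → X)) (hPmeas : Measurable P)
    (hP0 : ∀ x, (P x).map (fun ω => ω 0) = Measure.dirac x)
    (hPstep : ∀ x, (P x).map (fun ω n => ω (n + 1)) = ((P x).map (fun ω => ω 1)).bind P)
    (μ : Measure X) [SigmaFinite μ]
    (hinv : Measure.map (fun ω => ω 1) (μ.bind P) = μ)
    (hrecur : ∀ B : Set X, MeasurableSet B → 0 < μ B →
      ((μ.restrict B).bind P) {ω | ∀ n, 1 ≤ n → ω n ∉ B} = 0)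
    (A : Set X) (hA : MeasurableSet A)
    (μexit : Measure X)
    (hμexit : μexit = (μ.restrict Aᶜ).withDensity (fun x => (P x) {ω | ω 1 ∈ A})) :
    ∀ B : Set X, MeasurableSet B → B ⊆ Aᶜ →
      μexit B =
        ∫⁻ x in Aᶜ, (P x) {ω | ω 1 ∈ A ∧ ω (entrTime2 A ω - 1) ∈ B} ∂μ := by
  intro B hB hBA
  have hP : IsMarkovFamily P := ⟨hPmeas, hP0, hPstep⟩
  calc μexit B = ∫⁻ x in B, hP.step x A ∂μ := by
        rw [hμexit, withDensity_apply _ hB, Measure.restrict_restrict hB,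
          inter_eq_self_of_subset_left hBA]
        exact lintegral_congr fun x => (hP.step_apply_apply x hA).symm
    _ = ∫⁻ x in B, hP.step x A ∂hP.step.entrancePotential hA μ :=
        hP.setLIntegral_step_eq_entrancePotential hA hinv hrecur hBA
    _ = ∑' k, ∫⁻ x in Aᶜ, P x (nextExitAt A B k) ∂μ := by
        rw [Kernel.entrancePotential, Measure.restrict_sum _ hB, lintegral_sum_measure]
        exact tsum_congr fun k => hP.setLIntegral_step_killed_pow_comp_entranceFlow hA hB k μ
    _ = ∫⁻ x in Aᶜ, P x {ω | ω 1 ∈ A ∧ ω (entrTime2 A ω - 1) ∈ B} ∂μ :=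
        (hP.setLIntegral_compl_exit_eq_tsum hA hinv hrecur hB hBA).symm

/-- Let `Y` be a Markov chain on a topological space `X` given by its family `P` of path-space
laws, recurrent starting under a σ-finite invariant Borel measure `μ`, and let `A` be Borel
with `P_{μ|_{Aᶜ}}(Y₁ ∈ A) > 0`. Then the measure `μ_{Aᶜ}^{exit}(dx) = P_x(Y₁ ∈ A) μ(dx)`
on `Aᶜ` is invariant for the exit chain `Y^{Aᶜ→}` (sampling `Y` at the last position in `Aᶜ`
before each entrance into `A`), whose transition from `x` is: make one step conditioned to
land in `A`, then run until the position preceding the next entrance into `A`. -/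
theorem stmt11 {X : Type*} [TopologicalSpace X] [MeasurableSpace X] [BorelSpace X]
    (P : X → Measure (ℕ → X)) (hPmeas : Measurable P)
    (hPprob : ∀ x, IsProbabilityMeasure (P x))
    (hP0 : ∀ x, (P x).map (fun ω => ω 0) = Measure.dirac x)
    (hPstep : ∀ x, (P x).map (fun ω n => ω (n + 1)) = ((P x).map (fun ω => ω 1)).bind P)
    (μ : Measure X) [SigmaFinite μ]
    (hinv : Measure.map (fun ω => ω 1) (μ.bind P) = μ)
    (hrecur : ∀ B : Set X, MeasurableSet B → 0 < μ B →
      ((μ.restrict B).bind P) {ω | ∀ n, 1 ≤ n → ω n ∉ B} = 0)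
    (A : Set X) (hA : MeasurableSet A)
    (μexit : Measure X)
    (hμexit : μexit = (μ.restrict Aᶜ).withDensity (fun x => (P x) {ω | ω 1 ∈ A}))
    (hpos : 0 < μexit Aᶜ) :
    ∀ B : Set X, MeasurableSet B → B ⊆ Aᶜ →
      μexit B =
        ∫⁻ x in Aᶜ, (P x) {ω | ω 1 ∈ A ∧ ω (entrTime2 A ω - 1) ∈ B} ∂μ :=
  stmt11_general P hPmeas hP0 hPstep μ hinv hrecur A hA μexit hμexit
end

section
/- Let Y be a topologically irreducible weak Feller Markov chain on a metric space X. Then any invariant Borel measure μ of Y that is finite on some non-empty open set is locally finite. -/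
/-!
Let `T` be the one-step transition kernel and `G` an open set with `μ G < ∞`. Given `x`,
irreducibility yields `n` with `c := Tⁿ x G > 0`. The weak Feller property passes to `Tⁿ`, so by
the portmanteau theorem `y ↦ Tⁿ y G` is lower semicontinuous and `V := {y | c / 2 < Tⁿ y G}` is an
open neighbourhood of `x`. Since `μ` is `Tⁿ`-invariant, `(c / 2) μ V ≤ ∫ Tⁿ y G dμ = μ G < ∞`.
-/

open MeasureTheory Set Filter Topology
open scoped ENNReal BoundedContinuousFunction

namespace ProbabilityTheory.Kernel

section Markov

variable {X : Type*} [MeasurableSpace X] {κ : Kernel X X} {μ : Measure X}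

instance IsMarkovKernel.pow [IsMarkovKernel κ] (n : ℕ) : IsMarkovKernel (κ ^ n) := by
  induction n with
  | zero => exact inferInstanceAs (IsMarkovKernel Kernel.id)
  | succ n ih => rw [pow_succ]; exact inferInstanceAs (IsMarkovKernel (_ ∘ₖ κ))

lemma Invariant.pow (hκ : Invariant κ μ) (n : ℕ) : Invariant (κ ^ n) μ := by
  induction n with
  | zero => exact Measure.id_comp
  | succ n ih => rw [pow_succ]; exact ih.comp hκ

lemma Invariant.mul_measure_le (hκ : Invariant κ μ) {s : Set X} (hs : MeasurableSet s)
    (c : ℝ≥0∞) : c * μ {x | c ≤ κ x s} ≤ μ s :=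
  calc c * μ {x | c ≤ κ x s} ≤ ∫⁻ x, κ x s ∂μ :=
        mul_meas_ge_le_lintegral₀ (κ.measurable_coe hs).aemeasurable c
    _ = μ s := by rw [← Measure.bind_apply hs κ.aemeasurable, hκ.def]

lemma map_eval_eq_pow (κ : Kernel X (ℕ → X))
    (h0 : ∀ x, (κ x).map (fun ω => ω 0) = Measure.dirac x)
    (hstep : ∀ x, (κ x).map (fun ω n => ω (n + 1)) = ((κ x).map (fun ω => ω 1)).bind κ)
    (n : ℕ) : κ.map (fun ω => ω n) = κ.map (fun ω => ω 1) ^ n := by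
  induction n with
  | zero =>
    ext1 x
    rw [map_apply _ (measurable_pi_apply 0), h0, pow_zero]
    exact (id_apply x).symm
  | succ n ih =>
    ext1 x
    rw [pow_succ, ← ih]
    change _ = ((κ.map _) ∘ₖ _) x
    rw [← map_comp, map_apply _ (measurable_pi_apply _), map_apply _ (measurable_pi_apply n),
      comp_apply, map_apply _ (measurable_pi_apply 1), ← hstep,
      Measure.map_map (measurable_pi_apply n)
        (by fun_prop : Measurable fun (ω : ℕ → X) i => ω (i + 1))]
    rfl

end Markov

section WeakFeller

variable {X Y Z : Type*} [MeasurableSpace X] [MeasurableSpace Y] [MeasurableSpace Z]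
  [TopologicalSpace X] [TopologicalSpace Y] [TopologicalSpace Z]

def IsWeakFeller (κ : Kernel X Y) : Prop :=
  ∀ f : Y →ᵇ ℝ, Continuous fun x => ∫ y, f y ∂κ x

lemma isWeakFeller_id [OpensMeasurableSpace X] : IsWeakFeller (Kernel.id : Kernel X X) := by
  intro f
  simpa only [id_apply, integral_dirac' _ _ f.continuous.stronglyMeasurable] using f.continuous

lemma IsWeakFeller.comp [OpensMeasurableSpace Y] [OpensMeasurableSpace Z]
    {κ : Kernel X Y} {η : Kernel Y Z} [IsMarkovKernel κ] [IsMarkovKernel η]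
    (hκ : IsWeakFeller κ) (hη : IsWeakFeller η) : IsWeakFeller (η ∘ₖ κ) := by
  intro f
  let g : Y →ᵇ ℝ := .ofNormedAddCommGroup _ (hη f) ‖f‖ fun y => f.norm_integral_le_norm (η y)
  have hg : ∀ x, ∫ z, f z ∂(η ∘ₖ κ) x = ∫ y, g y ∂κ x := fun x =>
    integral_comp (f.integrable _)
  simpa only [hg] using hκ g

lemma IsWeakFeller.pow [OpensMeasurableSpace X] {κ : Kernel X X} [IsMarkovKernel κ]
    (hκ : IsWeakFeller κ) (n : ℕ) : IsWeakFeller (κ ^ n) := by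
  induction n with
  | zero => exact isWeakFeller_id
  | succ n ih => rw [pow_succ]; exact hκ.comp ih

lemma IsWeakFeller.lowerSemicontinuous_apply [OpensMeasurableSpace Y] [HasOuterApproxClosed Y]
    {κ : Kernel X Y} [IsMarkovKernel κ] (hκ : IsWeakFeller κ) {G : Set Y} (hG : IsOpen G) :
    LowerSemicontinuous fun x => κ x G := by
  let ν : X → ProbabilityMeasure Y := fun x => ⟨κ x, inferInstance⟩
  have hν : Continuous ν := continuous_iff_continuousAt.2 fun x =>
    ProbabilityMeasure.tendsto_iff_forall_integral_tendsto.2 fun f => (hκ f).continuousAt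
  exact lowerSemicontinuous_iff_le_liminf.2 fun x =>
    ProbabilityMeasure.le_liminf_measure_open_of_tendsto hν.continuousAt hG

end WeakFeller

section LocallyFinite

variable {X : Type*} [MeasurableSpace X] [TopologicalSpace X] [OpensMeasurableSpace X]
  [HasOuterApproxClosed X] {κ : Kernel X X} [IsMarkovKernel κ] {μ : Measure X}

lemma finiteAtFilter_nhds_of_invariant (hκ : IsWeakFeller κ) (hμ : Invariant κ μ) {G : Set X}
    (hG : IsOpen G) (hμG : μ G < ∞) {x : X} {n : ℕ} (hx : 0 < (κ ^ n) x G) :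
    μ.FiniteAtFilter (𝓝 x) := by
  set c := (κ ^ n) x G
  have hV : IsOpen {y | c / 2 < (κ ^ n) y G} :=
    ((hκ.pow n).lowerSemicontinuous_apply hG).isOpen_preimage (c / 2)
  have hxV : c / 2 < c := ENNReal.half_lt_self hx.ne' (measure_ne_top _ _)
  have hbound : c / 2 * μ {y | c / 2 < (κ ^ n) y G} ≤ μ G := calc
    _ ≤ c / 2 * μ {y | c / 2 ≤ (κ ^ n) y G} := by gcongr; exact le_of_lt
    _ ≤ μ G := (hμ.pow n).mul_measure_le hG.measurableSet _
  exact ⟨_, hV.mem_nhds hxV, ENNReal.lt_top_of_mul_ne_top_right (hbound.trans_lt hμG).ne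
    (ENNReal.half_pos hx.ne').ne'⟩

theorem isLocallyFiniteMeasure_of_invariant (hκ : IsWeakFeller κ) (hμ : Invariant κ μ)
    (hirr : ∀ x G, IsOpen G → G.Nonempty → ∃ n, 0 < (κ ^ n) x G)
    (hfin : ∃ G, IsOpen G ∧ G.Nonempty ∧ μ G < ∞) : IsLocallyFiniteMeasure μ := by
  obtain ⟨G, hG, hGne, hμG⟩ := hfin
  refine ⟨fun x => ?_⟩
  obtain ⟨n, hn⟩ := hirr x G hG hGne
  exact finiteAtFilter_nhds_of_invariant hκ hμ hG hμG hn

end LocallyFinite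

end ProbabilityTheory.Kernel

open ProbabilityTheory Kernel

/-- Let `Y` be a Markov chain on a metric space `X`, given by its family `P` of path-space
laws, which is topologically irreducible and weak Feller. Then any invariant Borel measure
`μ` of `Y` that is finite on some non-empty open set is locally finite. -/
theorem stmt13 {X : Type*} [MetricSpace X] [MeasurableSpace X] [BorelSpace X]
    (P : X → Measure (ℕ → X)) (hPmeas : Measurable P)
    (hPprob : ∀ x, IsProbabilityMeasure (P x))
    (hP0 : ∀ x, (P x).map (fun ω => ω 0) = Measure.dirac x)
    (hPstep : ∀ x, (P x).map (fun ω n => ω (n + 1)) = ((P x).map (fun ω => ω 1)).bind P)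
    (hirr : ∀ x : X, ∀ G : Set X, IsOpen G → G.Nonempty →
      0 < (P x) {ω | ∃ n, 1 ≤ n ∧ ω n ∈ G})
    (hfeller : ∀ f : X →ᵇ ℝ, Continuous fun x => ∫ ω, f (ω 1) ∂(P x))
    (μ : Measure X)
    (hinv : Measure.map (fun ω => ω 1) (μ.bind P) = μ)
    (hfin : ∃ G : Set X, IsOpen G ∧ G.Nonempty ∧ μ G < ⊤) :
    IsLocallyFiniteMeasure μ := by
  let κ : Kernel X (ℕ → X) := ⟨P, hPmeas⟩
  have : IsMarkovKernel κ := ⟨hPprob⟩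
  have := IsMarkovKernel.map κ (measurable_pi_apply 1)
  refine isLocallyFiniteMeasure_of_invariant (κ := κ.map (fun ω => ω 1)) (fun f => ?_)
    ((Measure.map_comp μ κ (measurable_pi_apply 1)).symm.trans hinv) (fun x G hG hGne => ?_) hfin
  · have hf : ∀ x, ∫ y, f y ∂(κ.map (fun ω => ω 1)) x = ∫ ω, f (ω 1) ∂(P x) := fun x => by
      rw [map_apply _ (measurable_pi_apply 1),
        integral_map (measurable_pi_apply 1).aemeasurable f.continuous.aestronglyMeasurable]
      rfl
    simpa only [hf] using hfeller f
  · obtain ⟨n, hn⟩ : ∃ n, 0 < P x {ω | ω n ∈ G} := by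
      by_contra! h
      exact (hirr x G hG hGne).ne' (measure_mono_null (fun ω ⟨n, _, hn⟩ => mem_iUnion.2 ⟨n, hn⟩)
        (measure_iUnion_null fun n => nonpos_iff_eq_zero.1 (h n)))
    refine ⟨n, ?_⟩
    rwa [← map_eval_eq_pow κ hP0 hPstep, map_apply' _ (measurable_pi_apply n) _ hG.measurableSet]
end

section
/- Let Y be a topologically irreducible, topologically recurrent, weak Feller Markov chain on a Polish space X. Then for every x ∈ X and every non-empty open set G ⊂ X, P_x(τ'_G(Y) < ∞) = 1. -/
/-!
The hitting probability `h y = P_y(τ'_G < ∞)` is the increasing limit of the probabilities `h_N`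
of hitting `G` within `N` steps, and `h_{N+1} y = ∫ max (1_G, h_N) dP_y(Y_1 ∈ ·)`. By the
portmanteau theorem, integrating a lower semicontinuous function against a weakly continuous
kernel gives a lower semicontinuous function, so every `h_N`, and hence `h`, is lower
semicontinuous. Irreducibility gives `1/k < h x` for some `k`, so `W = {1/k < h}` is an open
neighbourhood of `x`. By recurrence and the Markov property the chain started at `x` returns to `W`
infinitely often, and after each visit it hits `G` with probability at least `1/k`; hence it
cannot avoid `G` forever.
-/

open MeasureTheory Set Filter Topology
open scoped ENNReal BoundedContinuousFunction

theorem ENNReal.eq_zero_of_le_one_sub_mul {a c : ℝ≥0∞} (ha : a ≠ ⊤) (hc : c ≠ 0)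
    (h : a ≤ (1 - c) * a) : a = 0 := by
  by_contra ha0
  have hlt : (1 - c) * a < 1 * a :=
    (ENNReal.mul_lt_mul_iff_left ha0 ha).2
      (ENNReal.sub_lt_self ENNReal.one_ne_top one_ne_zero hc)
  rw [one_mul] at hlt
  exact (h.trans_lt hlt).false

theorem frequently_atTop_of_forall_mem_exists_lt {α : Type*} {u : ℕ → α} {V : Set α}
    (h : ∀ n, u n ∈ V → ∃ j, n < j ∧ u j ∈ V) {n₀ : ℕ} (h₀ : u n₀ ∈ V) :
    ∃ᶠ n in atTop, u n ∈ V := by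
  refine frequently_atTop.2 fun m => ?_
  induction m with
  | zero => exact ⟨n₀, n₀.zero_le, h₀⟩
  | succ m ih =>
    obtain ⟨j, hmj, hj⟩ := ih
    obtain ⟨k, hjk, hk⟩ := h j hj
    exact ⟨k, by omega, hk⟩

theorem lintegral_eq_lintegral_measure_ofReal_lt {Y : Type*} [MeasurableSpace Y] {f : Y → ℝ≥0∞}
    (hf : Measurable f) (μ : Measure Y) [SFinite μ] :
    ∫⁻ y, f y ∂μ = ∫⁻ t in Ioi (0 : ℝ), μ {y | ENNReal.ofReal t < f y} := by
  have hslice (a : ℝ≥0∞) :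
      ∫⁻ t in Ioi (0 : ℝ), {t : ℝ | ENNReal.ofReal t < a}.indicator 1 t = a := by
    rw [lintegral_indicator_one (measurableSet_lt ENNReal.measurable_ofReal measurable_const),
      Measure.restrict_apply (measurableSet_lt ENNReal.measurable_ofReal measurable_const)]
    rcases eq_or_ne a ⊤ with rfl | ha
    · simp
    · have : {t : ℝ | ENNReal.ofReal t < a} ∩ Ioi 0 = Ioo 0 a.toReal := by
        ext t
        simp only [mem_inter_iff, mem_ofPred_eq, mem_Ioi, mem_Ioo]
        rw [and_comm]
        exact and_congr_right fun ht => ENNReal.ofReal_lt_iff_lt_toReal ht.le ha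
      rw [this, Real.volume_Ioo, sub_zero, ENNReal.ofReal_toReal ha]
  have hmeas : Measurable (Function.uncurry fun (y : Y) (t : ℝ) =>
      {t : ℝ | ENNReal.ofReal t < f y}.indicator (1 : ℝ → ℝ≥0∞) t) :=
    measurable_const.indicator (measurableSet_lt (ENNReal.measurable_ofReal.comp measurable_snd)
      (hf.comp measurable_fst))
  calc ∫⁻ y, f y ∂μ
      = ∫⁻ y, (∫⁻ t in Ioi 0, {t : ℝ | ENNReal.ofReal t < f y}.indicator 1 t) ∂μ := by
        simp_rw [hslice]
    _ = ∫⁻ t in Ioi 0, ∫⁻ y, {y | ENNReal.ofReal t < f y}.indicator 1 y ∂μ :=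
        lintegral_lintegral_swap hmeas.aemeasurable
    _ = ∫⁻ t in Ioi (0 : ℝ), μ {y | ENNReal.ofReal t < f y} := by
        simp_rw [lintegral_indicator_one (measurableSet_lt measurable_const hf)]

theorem LowerSemicontinuous.lintegral_probabilityMeasure {X Y : Type*} [TopologicalSpace X]
    [FirstCountableTopology X] [TopologicalSpace Y] [MeasurableSpace Y] [OpensMeasurableSpace Y]
    [HasOuterApproxClosed Y] {κ : X → ProbabilityMeasure Y}
    (hκ : Continuous κ) {f : Y → ℝ≥0∞} (hf : LowerSemicontinuous f) :
    LowerSemicontinuous fun x => ∫⁻ y, f y ∂(κ x) := by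
  refine lowerSemicontinuous_iff_le_liminf.2 fun x => ?_
  simp_rw [lintegral_eq_lintegral_measure_ofReal_lt hf.measurable]
  calc ∫⁻ t in Ioi 0, (κ x : Measure Y) {y | ENNReal.ofReal t < f y}
      ≤ ∫⁻ t in Ioi 0,
          liminf (fun x' => (κ x' : Measure Y) {y | ENNReal.ofReal t < f y}) (𝓝 x) :=
        lintegral_mono fun t => ProbabilityMeasure.le_liminf_measure_open_of_tendsto
          (hκ.tendsto x) (hf.isOpen_preimage _)
    _ ≤ _ := lintegral_liminf_le fun x' => Antitone.measurable fun s t hst =>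
        measure_mono fun y hy => lt_of_le_of_lt (ENNReal.ofReal_le_ofReal hst) hy

section Paths

variable {X : Type*}

def pathShift (n : ℕ) (ω : ℕ → X) : ℕ → X := fun k => ω (k + n)

def pathCons (x : X) (η : ℕ → X) : ℕ → X
  | 0 => x
  | k + 1 => η k

def hitEvent (G : Set X) : Set (ℕ → X) := {ω | ∃ n, 1 ≤ n ∧ ω n ∈ G}

def hitEventUpTo (G : Set X) (N : ℕ) : Set (ℕ → X) := {ω | ∃ n, 1 ≤ n ∧ n ≤ N ∧ ω n ∈ G}

def firstVisitAvoiding (W G : Set X) (m n : ℕ) : Set (ℕ → X) :=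
  {ω | m ≤ n ∧ ω n ∈ W ∧ (∀ j, m ≤ j → j < n → ω j ∉ W) ∧ ∀ j, 1 ≤ j → j ≤ n → ω j ∉ G}

def visitAvoiding (W G : Set X) (m : ℕ) : Set (ℕ → X) :=
  {ω | ∃ n, m ≤ n ∧ ω n ∈ W ∧ ∀ j, 1 ≤ j → j ≤ n → ω j ∉ G}

theorem pathCons_pathShift_one {ω : ℕ → X} {x : X} (h : ω 0 = x) :
    pathCons x (pathShift 1 ω) = ω := by
  funext k
  cases k <;> simp [pathCons, pathShift, h]

theorem pathShift_preimage_hitEvent (n : ℕ) (G : Set X) :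
    pathShift n ⁻¹' hitEvent G = {ω | ∃ j, n < j ∧ ω j ∈ G} := by
  ext ω
  constructor
  · rintro ⟨k, hk, h⟩
    exact ⟨k + n, by omega, h⟩
  · rintro ⟨j, hj, h⟩
    exact ⟨j - n, by omega, by rwa [pathShift, Nat.sub_add_cancel hj.le]⟩

theorem hitEventUpTo_zero (G : Set X) : hitEventUpTo G 0 = ∅ :=
  eq_empty_of_forall_notMem fun _ ⟨_, h1, h0, _⟩ => by omega

theorem monotone_hitEventUpTo (G : Set X) : Monotone (hitEventUpTo G) :=
  fun _ _ hNM _ ⟨n, h1, hn, hG⟩ => ⟨n, h1, hn.trans hNM, hG⟩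

theorem iUnion_hitEventUpTo (G : Set X) : ⋃ N, hitEventUpTo G N = hitEvent G := by
  ext ω
  simp only [mem_iUnion, hitEventUpTo, hitEvent, mem_ofPred_eq]
  exact ⟨fun ⟨_, n, h1, _, hG⟩ => ⟨n, h1, hG⟩, fun ⟨n, h1, hG⟩ => ⟨n, n, h1, le_rfl, hG⟩⟩

theorem hitEventUpTo_succ (G : Set X) (N : ℕ) :
    hitEventUpTo G (N + 1) = pathShift 1 ⁻¹' ({η | η 0 ∈ G} ∪ hitEventUpTo G N) := by
  ext ω
  constructor
  · rintro ⟨n, h1, hn, hG⟩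
    obtain ⟨k, rfl⟩ : ∃ k, n = k + 1 := ⟨n - 1, by omega⟩
    rcases k.eq_zero_or_pos with rfl | hk
    · exact Or.inl hG
    · exact Or.inr ⟨k, hk, by omega, hG⟩
  · rintro (hG | ⟨k, hk, hkN, hG⟩)
    · exact ⟨1, le_rfl, by omega, hG⟩
    · exact ⟨k + 1, by omega, by omega, hG⟩

theorem dependsOn_firstVisitAvoiding (W G : Set X) (m n : ℕ) :
    DependsOn (· ∈ firstVisitAvoiding W G m n) (Iic n) := by
  have key : ∀ ω ω' : ℕ → X, (∀ j ≤ n, ω j = ω' j) →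
      ω ∈ firstVisitAvoiding W G m n → ω' ∈ firstVisitAvoiding W G m n := by
    rintro ω ω' h ⟨hmn, hn, hfirst, hG⟩
    exact ⟨hmn, h n le_rfl ▸ hn, fun j hmj hjn => h j hjn.le ▸ hfirst j hmj hjn,
      fun j hj hjn => h j hjn ▸ hG j hj hjn⟩
  exact fun ω ω' h => propext ⟨key ω ω' h, key ω' ω fun j hj => (h j hj).symm⟩

open Function in
theorem pairwise_disjoint_firstVisitAvoiding (W G : Set X) (m : ℕ) :
    Pairwise (Disjoint on firstVisitAvoiding W G m) := by
  intro n n' hne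
  refine disjoint_left.2 fun ω ⟨hmn, hn, hfirst, _⟩ ⟨hmn', hn', hfirst', _⟩ => ?_
  rcases hne.lt_or_gt with h | h
  · exact hfirst' n hmn h hn
  · exact hfirst n' hmn' h hn'

theorem iUnion_firstVisitAvoiding_subset (W G : Set X) (m : ℕ) :
    ⋃ n, firstVisitAvoiding W G m n ⊆ visitAvoiding W G m := by
  rintro ω ⟨_, ⟨n, rfl⟩, hmn, hn, -, hG⟩
  exact ⟨n, hmn, hn, hG⟩

theorem antitone_visitAvoiding (W G : Set X) : Antitone (visitAvoiding W G) :=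
  fun _ _ hm _ ⟨n, hmn, hn, hG⟩ => ⟨n, hm.trans hmn, hn, hG⟩

theorem iInter_visitAvoiding_subset (W G : Set X) :
    ⋂ m, visitAvoiding W G m ⊆ (hitEvent G)ᶜ ∩ {ω | ∃ᶠ n in atTop, ω n ∈ W} := by
  intro ω hω
  have hω' : ∀ m, ∃ n, m ≤ n ∧ ω n ∈ W ∧ ∀ j, 1 ≤ j → j ≤ n → ω j ∉ G := mem_iInter.1 hω
  refine ⟨fun ⟨j, hj, hjG⟩ => ?_, frequently_atTop.2 fun m => ?_⟩
  · obtain ⟨n, hjn, -, hG⟩ := hω' j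
    exact hG j hj hjn hjG
  · obtain ⟨n, hmn, hn, -⟩ := hω' m
    exact ⟨n, hmn, hn⟩

theorem compl_hitEvent_inter_frequently_subset (W G : Set X) (m : ℕ) :
    (hitEvent G)ᶜ ∩ {ω | ∃ᶠ n in atTop, ω n ∈ W} ⊆
      ⋃ n, firstVisitAvoiding W G m n ∩ pathShift n ⁻¹' (hitEvent G)ᶜ := by
  classical
  rintro ω ⟨hG, hW⟩
  have hex : ∃ n, m ≤ n ∧ ω n ∈ W := frequently_atTop.1 hW m
  have hG' : ∀ j, 1 ≤ j → ω j ∉ G := fun j hj hjG => hG ⟨j, hj, hjG⟩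
  refine mem_iUnion.2 ⟨Nat.find hex, ⟨(Nat.find_spec hex).1, (Nat.find_spec hex).2,
    fun j hmj hj hjW => Nat.find_min hex hj ⟨hmj, hjW⟩, fun j hj _ => hG' j hj⟩, ?_⟩
  rw [preimage_compl, pathShift_preimage_hitEvent]
  exact fun ⟨j, hj, hjG⟩ => hG' j (by omega) hjG

variable [MeasurableSpace X]

-- `P x` is the law of the path of the chain started at `x`; `map_shift` is the Markov property
-- at time `1`.
structure IsMarkovFamily (P : X → Measure (ℕ → X)) : Prop where
  measurable : Measurable P
  isProbabilityMeasure : ∀ x, IsProbabilityMeasure (P x)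
  map_eval_zero : ∀ x, (P x).map (fun ω => ω 0) = Measure.dirac x
  map_shift : ∀ x, (P x).map (fun ω n => ω (n + 1)) = ((P x).map (fun ω => ω 1)).bind P

theorem measurable_pathShift (n : ℕ) : Measurable (pathShift (X := X) n) :=
  measurable_pi_lambda _ fun k => measurable_pi_apply (k + n)

theorem measurable_pathCons (x : X) : Measurable (pathCons x) :=
  measurable_pi_lambda _ fun k => by
    cases k
    · exact measurable_const
    · exact measurable_pi_apply _

theorem measurableSet_hitEvent {G : Set X} (hG : MeasurableSet G) :
    MeasurableSet (hitEvent G) := by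
  unfold hitEvent; measurability

theorem measurableSet_hitEventUpTo {G : Set X} (hG : MeasurableSet G) (N : ℕ) :
    MeasurableSet (hitEventUpTo G N) := by
  unfold hitEventUpTo; measurability

theorem measurableSet_firstVisitAvoiding {W G : Set X} (hW : MeasurableSet W)
    (hG : MeasurableSet G) (m n : ℕ) : MeasurableSet (firstVisitAvoiding W G m n) := by
  unfold firstVisitAvoiding; measurability

theorem measurableSet_visitAvoiding {W G : Set X} (hW : MeasurableSet W)
    (hG : MeasurableSet G) (m : ℕ) : MeasurableSet (visitAvoiding W G m) := by
  unfold visitAvoiding; measurability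

namespace IsMarkovFamily

variable {P : X → Measure (ℕ → X)}

noncomputable def stepLaw (hP : IsMarkovFamily P) (x : X) : ProbabilityMeasure X :=
  ⟨(P x).map (fun ω => ω 1), haveI := hP.isProbabilityMeasure x
    Measure.isProbabilityMeasure_map (measurable_pi_apply 1).aemeasurable⟩

theorem coe_stepLaw (hP : IsMarkovFamily P) (x : X) :
    (hP.stepLaw x : Measure X) = (P x).map (fun ω => ω 1) := rfl

theorem map_pathShift_one (hP : IsMarkovFamily P) (x : X) :
    (P x).map (pathShift 1) = ((P x).map (fun ω => ω 1)).bind P :=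
  hP.map_shift x

theorem measure_pathShift_one_preimage (hP : IsMarkovFamily P) (x : X) {B : Set (ℕ → X)}
    (hB : MeasurableSet B) :
    P x (pathShift 1 ⁻¹' B) = ∫⁻ y, P y B ∂(P x).map (fun ω => ω 1) := by
  rw [← Measure.map_apply (measurable_pathShift 1) hB, hP.map_pathShift_one x,
    Measure.bind_apply hB hP.measurable.aemeasurable]

theorem lintegral_comp_pathShift_one (hP : IsMarkovFamily P) (x : X) {F : (ℕ → X) → ℝ≥0∞}
    (hF : Measurable F) :
    ∫⁻ ω, F (pathShift 1 ω) ∂P x = ∫⁻ y, ∫⁻ η, F η ∂P y ∂(P x).map (fun ω => ω 1) := by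
  rw [← lintegral_map hF (measurable_pathShift 1), hP.map_pathShift_one x,
    Measure.lintegral_bind hP.measurable.aemeasurable hF.aemeasurable]

theorem measurable_measure_eval (hP : IsMarkovFamily P) {A : Set (ℕ → X)} (hA : MeasurableSet A)
    (n : ℕ) : Measurable fun ω : ℕ → X => P (ω n) A :=
  (Measure.measurable_coe hA).comp (hP.measurable.comp (measurable_pi_apply n))

theorem continuous_stepLaw [TopologicalSpace X] [OpensMeasurableSpace X] (hP : IsMarkovFamily P)
    (hfeller : ∀ f : X →ᵇ ℝ, Continuous fun x => ∫ ω, f (ω 1) ∂(P x)) :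
    Continuous hP.stepLaw := by
  refine continuous_iff_continuousAt.2 fun x =>
    ProbabilityMeasure.tendsto_iff_forall_integral_tendsto.2 fun f => ?_
  have hmap (x' : X) : ∫ y, f y ∂(hP.stepLaw x' : Measure X) = ∫ ω, f (ω 1) ∂P x' :=
    integral_map (measurable_pi_apply 1).aemeasurable f.continuous.aestronglyMeasurable
  simp_rw [hmap]
  exact (hfeller f).continuousAt

section Singletons

variable [MeasurableSingletonClass X]

theorem ae_eval_zero (hP : IsMarkovFamily P) (x : X) :
    ∀ᵐ ω ∂P x, ω 0 = x := by
  have h : ∀ᵐ y ∂(P x).map (fun ω => ω 0), y = x := by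
    rw [hP.map_eval_zero, ae_dirac_eq]
    exact eventually_pure.2 rfl
  exact ae_of_ae_map (measurable_pi_apply 0).aemeasurable h

theorem measure_inter_pathShift_preimage_zero (hP : IsMarkovFamily P) {A : Set (ℕ → X)}
    (x : X) {S : Set (ℕ → X)} (hdep : DependsOn (· ∈ S) (Iic 0)) :
    P x (S ∩ A) = ∫⁻ ω in S, P (ω 0) A ∂P x := by
  have hSae : ∀ᵐ ω ∂P x, ω ∈ S ↔ (fun _ => x) ∈ S := by
    filter_upwards [hP.ae_eval_zero x] with ω h0
    exact iff_of_eq (hdep fun i hi => by rw [Nat.le_zero.1 (mem_Iic.1 hi)]; exact h0)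
  have := hP.isProbabilityMeasure x
  by_cases hc : (fun _ => x) ∈ S
  · have hS : S =ᵐ[P x] (univ : Set (ℕ → X)) := eventuallyEq_set.2 <| by
      filter_upwards [hSae] with ω h
      exact iff_of_true (h.2 hc) trivial
    calc P x (S ∩ A) = P x A := by rw [measure_congr (hS.inter (ae_eq_refl A)), univ_inter]
      _ = ∫⁻ ω, P (ω 0) A ∂P x := by
        rw [lintegral_congr_ae ((hP.ae_eval_zero x).mono fun ω h0 => by rw [h0]),
          lintegral_const, measure_univ, mul_one]
      _ = ∫⁻ ω in S, P (ω 0) A ∂P x := by rw [setLIntegral_congr hS, Measure.restrict_univ]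
  · have hS : P x S = 0 := by
      rw [measure_eq_zero_iff_ae_notMem]
      filter_upwards [hSae] with ω h
      simpa [hc] using h
    rw [measure_mono_null inter_subset_left hS, setLIntegral_measure_zero _ _ hS]

theorem measure_inter_pathShift_preimage (hP : IsMarkovFamily P) {A : Set (ℕ → X)}
    (hA : MeasurableSet A) {n : ℕ} (x : X) {S : Set (ℕ → X)} (hS : MeasurableSet S)
    (hdep : DependsOn (· ∈ S) (Iic n)) :
    P x (S ∩ pathShift n ⁻¹' A) = ∫⁻ ω in S, P (ω n) A ∂P x := by
  induction n generalizing x S with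
  | zero => exact hP.measure_inter_pathShift_preimage_zero x hdep
  | succ n ih =>
    set S' := pathCons x ⁻¹' S
    have hS' : MeasurableSet S' := measurable_pathCons x hS
    have hdep' : DependsOn (· ∈ S') (Iic n) := fun η η' h => hdep fun i hi => by
      cases i with
      | zero => rfl
      | succ i => exact h i (by simp only [mem_Iic] at hi ⊢; omega)
    have hSae : S =ᵐ[P x] pathShift 1 ⁻¹' S' := eventuallyEq_set.2 <| by
      filter_upwards [hP.ae_eval_zero x] with ω h0
      rw [mem_preimage, mem_preimage, pathCons_pathShift_one h0]
    have hg := hP.measurable_measure_eval hA n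
    calc P x (S ∩ pathShift (n + 1) ⁻¹' A)
        = P x (pathShift 1 ⁻¹' (S' ∩ pathShift n ⁻¹' A)) :=
          measure_congr (hSae.inter (ae_eq_refl _))
      _ = ∫⁻ y, ∫⁻ η in S', P (η n) A ∂P y ∂(P x).map (fun ω => ω 1) := by
          rw [hP.measure_pathShift_one_preimage x (hS'.inter (measurable_pathShift n hA))]
          exact lintegral_congr fun y => ih y hS' hdep'
      _ = ∫⁻ ω in pathShift 1 ⁻¹' S', P (ω (n + 1)) A ∂P x := by
          simp_rw [← lintegral_indicator hS',
            ← lintegral_indicator (measurable_pathShift 1 hS')]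
          exact (hP.lintegral_comp_pathShift_one x (hg.indicator hS')).symm
      _ = ∫⁻ ω in S, P (ω (n + 1)) A ∂P x := setLIntegral_congr hSae.symm

theorem ae_forall_mem_exists_lt_mem (hP : IsMarkovFamily P) {V : Set X} (hV : MeasurableSet V)
    (hret : ∀ y ∈ V, P y (hitEvent V) = 1) (x : X) :
    ∀ᵐ ω ∂P x, ∀ n, ω n ∈ V → ∃ j, n < j ∧ ω j ∈ V := by
  have := hP.isProbabilityMeasure
  refine ae_all_iff.2 fun n => ?_
  have hdep : DependsOn (· ∈ {ω : ℕ → X | ω n ∈ V}) (Iic n) := fun ω ω' h => by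
    change (ω n ∈ V) = (ω' n ∈ V)
    rw [h n (mem_Iic.2 le_rfl)]
  have hSn : MeasurableSet {ω : ℕ → X | ω n ∈ V} := measurable_pi_apply n hV
  have hnull : P x ({ω | ω n ∈ V} ∩ pathShift n ⁻¹' (hitEvent V)ᶜ) = 0 := by
    rw [hP.measure_inter_pathShift_preimage (measurableSet_hitEvent hV).compl x hSn hdep]
    refine (setLIntegral_congr_fun hSn fun ω hω => ?_).trans lintegral_zero
    exact (prob_compl_eq_zero_iff (measurableSet_hitEvent hV)).2 (hret _ hω)
  refine measure_mono_null (fun ω hω => ?_) hnull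
  obtain ⟨hn, hnext⟩ : ω n ∈ V ∧ ¬∃ j, n < j ∧ ω j ∈ V := Classical.not_imp.1 hω
  rw [mem_inter_iff, preimage_compl, pathShift_preimage_hitEvent]
  exact ⟨hn, hnext⟩

theorem measure_firstVisitAvoiding_inter_le (hP : IsMarkovFamily P) {W G : Set X}
    (hW : MeasurableSet W) (hG : MeasurableSet G) {c : ℝ≥0∞}
    (hWG : ∀ y ∈ W, c ≤ P y (hitEvent G)) (x : X) (m n : ℕ) :
    P x (firstVisitAvoiding W G m n ∩ pathShift n ⁻¹' (hitEvent G)ᶜ) ≤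
      (1 - c) * P x (firstVisitAvoiding W G m n) := by
  have := hP.isProbabilityMeasure
  have hE := measurableSet_firstVisitAvoiding hW hG m n
  rw [hP.measure_inter_pathShift_preimage (measurableSet_hitEvent hG).compl x hE
    (dependsOn_firstVisitAvoiding W G m n), ← setLIntegral_const]
  refine setLIntegral_mono' hE fun ω hω => ?_
  rw [prob_compl_eq_one_sub (measurableSet_hitEvent hG)]
  exact tsub_le_tsub_left (hWG _ hω.2.1) 1

-- Conditioning on the first visit to `W` at or after time `m` gives
-- `P x B ≤ (1 - c) * P x (visitAvoiding W G m)`, and as `m → ∞` the right-hand side decreases to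
-- at most `(1 - c) * P x B`.
theorem measure_compl_hitEvent_inter_frequently_eq_zero (hP : IsMarkovFamily P) {W G : Set X}
    (hW : MeasurableSet W) (hG : MeasurableSet G) {c : ℝ≥0∞} (hc : c ≠ 0)
    (hWG : ∀ y ∈ W, c ≤ P y (hitEvent G)) (x : X) :
    P x ((hitEvent G)ᶜ ∩ {ω | ∃ᶠ n in atTop, ω n ∈ W}) = 0 := by
  have := hP.isProbabilityMeasure
  set B := (hitEvent G)ᶜ ∩ {ω : ℕ → X | ∃ᶠ n in atTop, ω n ∈ W}
  have hbound (m : ℕ) : P x B ≤ (1 - c) * P x (visitAvoiding W G m) :=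
    calc P x B ≤ P x (⋃ n, firstVisitAvoiding W G m n ∩ pathShift n ⁻¹' (hitEvent G)ᶜ) :=
          measure_mono (compl_hitEvent_inter_frequently_subset W G m)
      _ ≤ ∑' n, P x (firstVisitAvoiding W G m n ∩ pathShift n ⁻¹' (hitEvent G)ᶜ) :=
          measure_iUnion_le _
      _ ≤ ∑' n, (1 - c) * P x (firstVisitAvoiding W G m n) :=
          ENNReal.tsum_le_tsum (hP.measure_firstVisitAvoiding_inter_le hW hG hWG x m)
      _ = (1 - c) * P x (⋃ n, firstVisitAvoiding W G m n) := by
          rw [ENNReal.tsum_mul_left, measure_iUnion (pairwise_disjoint_firstVisitAvoiding W G m)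
            (measurableSet_firstVisitAvoiding hW hG m)]
      _ ≤ (1 - c) * P x (visitAvoiding W G m) := by
          gcongr
          exact iUnion_firstVisitAvoiding_subset W G m
  have hlim : Tendsto (fun m => (1 - c) * P x (visitAvoiding W G m)) atTop
      (𝓝 ((1 - c) * P x (⋂ m, visitAvoiding W G m))) :=
    ENNReal.Tendsto.const_mul (tendsto_measure_iInter_atTop
      (fun m => (measurableSet_visitAvoiding hW hG m).nullMeasurableSet)
      (antitone_visitAvoiding W G) ⟨0, measure_ne_top _ _⟩) (Or.inr (by simp))
  refine ENNReal.eq_zero_of_le_one_sub_mul (measure_ne_top _ _) hc ?_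
  calc P x B ≤ (1 - c) * P x (⋂ m, visitAvoiding W G m) := ge_of_tendsto' hlim hbound
    _ ≤ (1 - c) * P x B := by
      gcongr
      exact iInter_visitAvoiding_subset W G

theorem measure_hitEventUpTo_succ (hP : IsMarkovFamily P) {G : Set X} (hG : MeasurableSet G)
    (N : ℕ) (y : X) :
    P y (hitEventUpTo G (N + 1)) =
      ∫⁻ z, G.indicator 1 z ⊔ P z (hitEventUpTo G N) ∂(P y).map (fun ω => ω 1) := by
  have := hP.isProbabilityMeasure
  rw [hitEventUpTo_succ, hP.measure_pathShift_one_preimage y (B := {η | η 0 ∈ G} ∪ _)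
    (((measurable_pi_apply 0) hG).union (measurableSet_hitEventUpTo hG N))]
  refine lintegral_congr fun z => ?_
  have hstart : {η : ℕ → X | η 0 ∈ G} =ᵐ[P z] {_η | z ∈ G} := eventuallyEq_set.2 <| by
    filter_upwards [hP.ae_eval_zero z] with η h0
    rw [h0]
  rw [measure_congr (hstart.union (ae_eq_refl (hitEventUpTo G N)))]
  by_cases hz : z ∈ G
  · simp [hz, prob_le_one]
  · simp [hz]

theorem lowerSemicontinuous_measure_hitEvent [TopologicalSpace X] [OpensMeasurableSpace X]
    [FirstCountableTopology X] [HasOuterApproxClosed X] (hP : IsMarkovFamily P)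
    (hstep : Continuous hP.stepLaw) {G : Set X} (hG : IsOpen G) :
    LowerSemicontinuous fun y => P y (hitEvent G) := by
  have hsup (y : X) : P y (hitEvent G) = ⨆ N, P y (hitEventUpTo G N) := by
    rw [← iUnion_hitEventUpTo, (monotone_hitEventUpTo G).measure_iUnion]
  simp_rw [hsup]
  refine lowerSemicontinuous_iSup fun N => ?_
  induction N with
  | zero =>
    simp only [hitEventUpTo_zero, measure_empty]
    exact lowerSemicontinuous_const
  | succ N ih =>
    simp_rw [hP.measure_hitEventUpTo_succ hG.measurableSet, ← hP.coe_stepLaw]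
    exact LowerSemicontinuous.lintegral_probabilityMeasure hstep
      ((hG.lowerSemicontinuous_indicator zero_le_one).sup ih)

end Singletons

end IsMarkovFamily

end Paths

/-- Let `Y` be a topologically irreducible, topologically recurrent, weak Feller Markov chain
on a Polish space `X`, given by its family `P` of path-space laws. Then for every `x ∈ X` and
every non-empty open set `G`, the chain started at `x` hits `G` at some time `n ≥ 1` a.s. -/
theorem stmt14 {X : Type*} [TopologicalSpace X] [PolishSpace X] [MeasurableSpace X]
    [BorelSpace X]
    (P : X → Measure (ℕ → X)) (hPmeas : Measurable P)
    (hPprob : ∀ x, IsProbabilityMeasure (P x))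
    (hP0 : ∀ x, (P x).map (fun ω => ω 0) = Measure.dirac x)
    (hPstep : ∀ x, (P x).map (fun ω n => ω (n + 1)) = ((P x).map (fun ω => ω 1)).bind P)
    (hrec : ∀ G : Set X, IsOpen G → ∀ x ∈ G, (P x) {ω | ∃ n, 1 ≤ n ∧ ω n ∈ G} = 1)
    (hirr : ∀ x : X, ∀ G : Set X, IsOpen G → G.Nonempty →
      0 < (P x) {ω | ∃ n, 1 ≤ n ∧ ω n ∈ G})
    (hfeller : ∀ f : X →ᵇ ℝ, Continuous fun x => ∫ ω, f (ω 1) ∂(P x)) :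
    ∀ x : X, ∀ G : Set X, IsOpen G → G.Nonempty →
      (P x) {ω | ∃ n, 1 ≤ n ∧ ω n ∈ G} = 1 := by
  have hP : IsMarkovFamily P := ⟨hPmeas, hPprob, hP0, hPstep⟩
  intro x G hG hGne
  have hlsc := hP.lowerSemicontinuous_measure_hitEvent (hP.continuous_stepLaw hfeller) hG
  obtain ⟨k, hk⟩ := ENNReal.exists_inv_nat_lt (hirr x G hG hGne).ne'
  set W := {y | (k : ℝ≥0∞)⁻¹ < P y (hitEvent G)}
  have hW : IsOpen W := hlsc.isOpen_preimage _
  have hfreq : ∀ᵐ ω ∂P x, ∃ᶠ n in atTop, ω n ∈ W := by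
    filter_upwards [hP.ae_eval_zero x,
      hP.ae_forall_mem_exists_lt_mem hW.measurableSet (hrec W hW) x] with ω h0 hnext
    exact frequently_atTop_of_forall_mem_exists_lt hnext (n₀ := 0) (h0 ▸ hk)
  have hnull := hP.measure_compl_hitEvent_inter_frequently_eq_zero hW.measurableSet
    hG.measurableSet (ENNReal.inv_ne_zero.2 (ENNReal.natCast_ne_top k)) (fun y hy => hy.le) x
  rw [measure_inter_conull hfreq] at hnull
  have := hPprob x
  exact (prob_compl_eq_zero_iff (measurableSet_hitEvent hG.measurableSet)).1 hnull
end
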